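/- arXiv:1310.5156 — 8 statements merged into one kernel-verified Lean document; each statement's English description precedes it below -/
import Mathlib

section
/- For any two bounded linear operators A, Ã : X → Y between real Hilbert spaces and every real number α > 0, the regularized pseudoinverses satisfy the perturbation bound ‖R_α(A) − R_α(Ã)‖ ≤ (9/(4α)) ‖A − Ã‖. -/
/-!
Write `B = (α + A*A)⁻¹` and `B̃ = (α + Ã*Ã)⁻¹`. The resolvent identity
`B - B̃ = B (Ã*Ã - A*A) B̃` together with `Ã*Ã - A*A = A*(Ã - A) + (Ã* - A*)Ã` splits
`B A* - B̃ Ã*` into `B (A* - Ã*) + (B A*)(Ã - A)(B̃ Ã*) + B (Ã* - A*)(Ã B̃ Ã*)`.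
The bounds `‖B‖ ≤ 1/α`, `‖B A*‖ ≤ 1/(2√α)` and `‖Ã B̃ Ã*‖ ≤ 1` all come from
`⟪z, B z⟫ = α ‖B z‖² + ‖A B z‖²`, and give `(1/α + 1/(4α) + 1/α) ‖A - Ã‖`.
-/

open ContinuousLinearMap

theorem sub_eq_mul_sub_mul_of_mul_eq_one {R : Type*} [Ring R] {s s' b b' : R}
    (hb : b * s = 1) (hb' : s' * b' = 1) : b - b' = b * (s' - s) * b' := by
  calc b - b' = b * (s' * b') - b * s * b' := by rw [hb, hb', mul_one, one_mul]
    _ = b * (s' - s) * b' := by noncomm_ring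

section RegularizedInverse

variable {X Y : Type*}
  [NormedAddCommGroup X] [InnerProductSpace ℝ X] [CompleteSpace X]
  [NormedAddCommGroup Y] [InnerProductSpace ℝ Y] [CompleteSpace Y]
  {T : X →L[ℝ] Y} {α : ℝ} {B : X →L[ℝ] X}

theorem inner_apply_eq_of_regularized_comp_eq_one
    (hB : (α • (1 : X →L[ℝ] X) + adjoint T ∘L T) ∘L B = 1) (z : X) :
    inner ℝ z (B z) = α * ‖B z‖ ^ 2 + ‖T (B z)‖ ^ 2 := by
  have hz : α • B z + adjoint T (T (B z)) = z := by simpa using congrArg (· z) hB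
  nth_rewrite 1 [← hz]
  rw [inner_add_left, real_inner_smul_left, real_inner_self_eq_norm_sq, adjoint_inner_left,
    real_inner_self_eq_norm_sq]

theorem norm_le_inv_of_regularized_comp_eq_one (hα : 0 < α)
    (hB : (α • (1 : X →L[ℝ] X) + adjoint T ∘L T) ∘L B = 1) : ‖B‖ ≤ α⁻¹ := by
  refine opNorm_le_bound _ (by positivity) fun z ↦ ?_
  have h := inner_apply_eq_of_regularized_comp_eq_one hB z
  have hcs := real_inner_le_norm z (B z)
  have : α * ‖B z‖ ≤ ‖z‖ := by
    rcases (norm_nonneg (B z)).eq_or_lt with h0 | hpos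
    · rw [← h0]; simp
    · nlinarith [sq_nonneg ‖T (B z)‖]
  rw [inv_mul_eq_div, le_div_iff₀ hα]
  linarith

theorem norm_comp_adjoint_le_of_regularized_comp_eq_one (hα : 0 < α)
    (hB : (α • (1 : X →L[ℝ] X) + adjoint T ∘L T) ∘L B = 1) :
    ‖B ∘L adjoint T‖ ≤ 1 / (2 * √α) := by
  refine opNorm_le_bound _ (by positivity) fun y ↦ ?_
  set x := B (adjoint T y)
  have h := inner_apply_eq_of_regularized_comp_eq_one hB (adjoint T y)
  rw [adjoint_inner_left] at h
  have hcs := real_inner_le_norm y (T x)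
  -- `α ‖x‖² ≤ ‖T x‖ (‖y‖ - ‖T x‖) ≤ ‖y‖² / 4`
  have hsq : (√α * ‖x‖) ^ 2 ≤ (‖y‖ / 2) ^ 2 := by
    rw [mul_pow, Real.sq_sqrt hα.le]
    nlinarith [sq_nonneg (‖T x‖ - ‖y‖ / 2)]
  have hle : √α * ‖x‖ ≤ ‖y‖ / 2 :=
    (pow_le_pow_iff_left₀ (by positivity) (by positivity) two_ne_zero).mp hsq
  rw [comp_apply, div_mul_eq_mul_div, le_div_iff₀ (by positivity)]
  linarith

theorem norm_comp_comp_adjoint_le_one_of_regularized_comp_eq_one (hα : 0 ≤ α)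
    (hB : (α • (1 : X →L[ℝ] X) + adjoint T ∘L T) ∘L B = 1) :
    ‖T ∘L B ∘L adjoint T‖ ≤ 1 := by
  refine opNorm_le_bound _ zero_le_one fun y ↦ ?_
  have h := inner_apply_eq_of_regularized_comp_eq_one hB (adjoint T y)
  rw [adjoint_inner_left] at h
  have hcs := real_inner_le_norm y (T (B (adjoint T y)))
  simp only [comp_apply, one_mul]
  rcases (norm_nonneg (T (B (adjoint T y)))).eq_or_lt with h0 | hpos
  · rw [← h0]; simp
  · nlinarith [sq_nonneg ‖B (adjoint T y)‖]

theorem comp_adjoint_sub_comp_adjoint_eq (A At : X →L[ℝ] Y) {Bt : X →L[ℝ] X}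
    (hB : B ∘L (α • (1 : X →L[ℝ] X) + adjoint A ∘L A) = 1)
    (hBt : (α • (1 : X →L[ℝ] X) + adjoint At ∘L At) ∘L Bt = 1) :
    B ∘L adjoint A - Bt ∘L adjoint At =
      B ∘L (adjoint A - adjoint At) + (B ∘L adjoint A) ∘L (At - A) ∘L (Bt ∘L adjoint At) +
        B ∘L (adjoint At - adjoint A) ∘L (At ∘L Bt ∘L adjoint At) := by
  have hres := sub_eq_mul_sub_mul_of_mul_eq_one hB hBt
  have : B ∘L adjoint A - Bt ∘L adjoint At =
      B ∘L (adjoint A - adjoint At) + (B - Bt) ∘L adjoint At := by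
    rw [sub_comp, comp_sub]; abel
  rw [this, hres]
  ext x
  simp only [add_apply, sub_apply, comp_apply, mul_apply_eq_comp, smul_apply, map_sub, map_add]
  abel

end RegularizedInverse

theorem stmt_3_general {X Y : Type*}
    [NormedAddCommGroup X] [InnerProductSpace ℝ X] [CompleteSpace X]
    [NormedAddCommGroup Y] [InnerProductSpace ℝ Y] [CompleteSpace Y]
    (A At : X →L[ℝ] Y) (α : ℝ) (hα : 0 < α)
    (B Bt : X →L[ℝ] X)
    (hB₁ : B ∘L (α • (1 : X →L[ℝ] X) + ContinuousLinearMap.adjoint A ∘L A) = 1)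
    (hB₂ : (α • (1 : X →L[ℝ] X) + ContinuousLinearMap.adjoint A ∘L A) ∘L B = 1)
    (hBt₂ : (α • (1 : X →L[ℝ] X) + ContinuousLinearMap.adjoint At ∘L At) ∘L Bt = 1) :
    ‖B ∘L ContinuousLinearMap.adjoint A - Bt ∘L ContinuousLinearMap.adjoint At‖ ≤
      9 / (4 * α) * ‖A - At‖ := by
  have hB := norm_le_inv_of_regularized_comp_eq_one hα hB₂
  have hBA := norm_comp_adjoint_le_of_regularized_comp_eq_one hα hB₂
  have hBtAt := norm_comp_adjoint_le_of_regularized_comp_eq_one hα hBt₂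
  have hAtBtAt := norm_comp_comp_adjoint_le_one_of_regularized_comp_eq_one hα.le hBt₂
  have hadj : ‖adjoint A - adjoint At‖ = ‖A - At‖ := by
    rw [← map_sub, LinearIsometryEquiv.norm_map]
  have hsub : ‖At - A‖ = ‖A - At‖ := norm_sub_rev _ _
  have hsub' : ‖adjoint At - adjoint A‖ = ‖A - At‖ := by rw [norm_sub_rev, hadj]
  have h₁ : ‖B ∘L (adjoint A - adjoint At)‖ ≤ α⁻¹ * ‖A - At‖ := by
    grw [opNorm_comp_le, hB, hadj]
  have h₂ : ‖(B ∘L adjoint A) ∘L (At - A) ∘L (Bt ∘L adjoint At)‖ ≤ (4 * α)⁻¹ * ‖A - At‖ := by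
    grw [opNorm_comp_le (B ∘L adjoint A), opNorm_comp_le (At - A), hBA, hBtAt, hsub]
    field_simp
    rw [Real.sq_sqrt hα.le]
    exact (by ring : _ = _).le
  have h₃ : ‖B ∘L (adjoint At - adjoint A) ∘L (At ∘L Bt ∘L adjoint At)‖ ≤ α⁻¹ * ‖A - At‖ := by
    grw [opNorm_comp_le, opNorm_comp_le, hB, hsub', hAtBtAt, mul_one]
  rw [comp_adjoint_sub_comp_adjoint_eq A At hB₁ hBt₂]
  grw [norm_add_le, norm_add_le, h₁, h₂, h₃]
  field_simp
  norm_num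

/-- For bounded linear operators `A, Ã : X → Y` between real Hilbert spaces and `α > 0`,
the regularized pseudoinverses satisfy `‖R_α(A) − R_α(Ã)‖ ≤ (9/(4α)) ‖A − Ã‖`. -/
theorem stmt_3 {X Y : Type*}
    [NormedAddCommGroup X] [InnerProductSpace ℝ X] [CompleteSpace X]
    [NormedAddCommGroup Y] [InnerProductSpace ℝ Y] [CompleteSpace Y]
    (A At : X →L[ℝ] Y) (α : ℝ) (hα : 0 < α)
    (B Bt : X →L[ℝ] X)
    (hB₁ : B ∘L (α • (1 : X →L[ℝ] X) + ContinuousLinearMap.adjoint A ∘L A) = 1)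
    (hB₂ : (α • (1 : X →L[ℝ] X) + ContinuousLinearMap.adjoint A ∘L A) ∘L B = 1)
    (hBt₁ : Bt ∘L (α • (1 : X →L[ℝ] X) + ContinuousLinearMap.adjoint At ∘L At) = 1)
    (hBt₂ : (α • (1 : X →L[ℝ] X) + ContinuousLinearMap.adjoint At ∘L At) ∘L Bt = 1) :
    ‖B ∘L ContinuousLinearMap.adjoint A - Bt ∘L ContinuousLinearMap.adjoint At‖ ≤
      9 / (4 * α) * ‖A - At‖ :=
  stmt_3_general A At α hα B Bt hB₁ hB₂ hBt₂
end

section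
/- Let A : X → Y be a bounded linear operator between real Hilbert spaces, let σ ≥ 0 be such that ‖Ax‖ ≥ σ‖x‖ for every x ∈ X, and let α > 0. Then for every e ∈ X one has ‖e − R_α(A)Ae‖ ≤ (α/(α + σ²)) ‖e‖. -/
/-!
Put `x = B e`. Since `B` is a left inverse of `α + A*A`, the residual `e - B A*A e` equals `α x`;
since it is also a right inverse, `(α + A*A) x = e`, so
`⟪x, e⟫ = α‖x‖² + ‖Ax‖² ≥ (α + σ²)‖x‖²`, and Cauchy–Schwarz gives `(α + σ²)‖x‖ ≤ ‖e‖`.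
-/

open ContinuousLinearMap

open scoped InnerProductSpace

theorem ContinuousLinearMap.sub_comp_apply_eq_smul_of_comp_eq_one {𝕜 E : Type*} [Field 𝕜]
    [TopologicalSpace E] [AddCommGroup E] [Module 𝕜 E] [ContinuousConstSMul 𝕜 E]
    [IsTopologicalAddGroup E] {B T : E →L[𝕜] E} {α : 𝕜} (h : B ∘L (α • 1 + T) = 1) (e : E) :
    e - (B ∘L T) e = α • B e := by
  have he := congrArg (fun S : E →L[𝕜] E => S e) h
  simp only [comp_apply, add_apply, smul_apply, one_apply_eq_self, map_add, map_smul] at he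
  rw [sub_eq_iff_eq_add, comp_apply, he]

theorem mul_norm_le_norm_of_mul_norm_sq_le_inner {X : Type*} [NormedAddCommGroup X]
    [InnerProductSpace ℝ X] {c : ℝ} {x y : X} (h : c * ‖x‖ ^ 2 ≤ ⟪x, y⟫_ℝ) :
    c * ‖x‖ ≤ ‖y‖ := by
  rcases (norm_nonneg x).eq_or_lt with hx | hx
  · rw [← hx, mul_zero]
    exact norm_nonneg y
  · have hcs : c * ‖x‖ * ‖x‖ ≤ ‖y‖ * ‖x‖ := by
      calc c * ‖x‖ * ‖x‖ = c * ‖x‖ ^ 2 := by ring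
        _ ≤ ⟪x, y⟫_ℝ := h
        _ ≤ ‖x‖ * ‖y‖ := real_inner_le_norm x y
        _ = ‖y‖ * ‖x‖ := mul_comm _ _
    exact le_of_mul_le_mul_right hcs hx

theorem add_sq_mul_norm_sq_le_inner_adjoint_comp {X Y : Type*}
    [NormedAddCommGroup X] [InnerProductSpace ℝ X] [CompleteSpace X]
    [NormedAddCommGroup Y] [InnerProductSpace ℝ Y] [CompleteSpace Y]
    (A : X →L[ℝ] Y) {σ : ℝ} (hσ : 0 ≤ σ) (hlow : ∀ x : X, σ * ‖x‖ ≤ ‖A x‖) (α : ℝ) (x : X) :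
    (α + σ ^ 2) * ‖x‖ ^ 2 ≤ ⟪x, (α • (1 : X →L[ℝ] X) + adjoint A ∘L A) x⟫_ℝ := by
  have hinner : ⟪x, (α • (1 : X →L[ℝ] X) + adjoint A ∘L A) x⟫_ℝ = α * ‖x‖ ^ 2 + ‖A x‖ ^ 2 := by
    rw [add_apply, smul_apply, one_apply_eq_self, comp_apply, inner_add_right, real_inner_smul_right,
      real_inner_self_eq_norm_sq, adjoint_inner_right, real_inner_self_eq_norm_sq]
  have hsq : (σ * ‖x‖) ^ 2 ≤ ‖A x‖ ^ 2 := pow_le_pow_left₀ (by positivity) (hlow x) 2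
  rw [hinner]
  linarith

/-- If `A : X → Y` is a bounded linear operator between real Hilbert spaces with
`‖Ax‖ ≥ σ‖x‖` for all `x`, `σ ≥ 0` and `α > 0`, then for every `e ∈ X`,
`‖e − R_α(A) A e‖ ≤ (α/(α + σ²)) ‖e‖`. -/
theorem stmt_4 {X Y : Type*}
    [NormedAddCommGroup X] [InnerProductSpace ℝ X] [CompleteSpace X]
    [NormedAddCommGroup Y] [InnerProductSpace ℝ Y] [CompleteSpace Y]
    (A : X →L[ℝ] Y) (σ : ℝ) (hσ : 0 ≤ σ) (hlow : ∀ x : X, σ * ‖x‖ ≤ ‖A x‖)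
    (α : ℝ) (hα : 0 < α)
    (B : X →L[ℝ] X)
    (hB₁ : B ∘L (α • (1 : X →L[ℝ] X) + ContinuousLinearMap.adjoint A ∘L A) = 1)
    (hB₂ : (α • (1 : X →L[ℝ] X) + ContinuousLinearMap.adjoint A ∘L A) ∘L B = 1) :
    ∀ e : X, ‖e - ((B ∘L ContinuousLinearMap.adjoint A) ∘L A) e‖ ≤
      α / (α + σ ^ 2) * ‖e‖ := by
  intro e
  have hresidual : e - ((B ∘L adjoint A) ∘L A) e = α • B e :=
    sub_comp_apply_eq_smul_of_comp_eq_one hB₁ e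
  have hBe : (α + σ ^ 2) * ‖B e‖ ≤ ‖e‖ := by
    have h := mul_norm_le_norm_of_mul_norm_sq_le_inner
      (add_sq_mul_norm_sq_le_inner_adjoint_comp A hσ hlow α (B e))
    rwa [← comp_apply, hB₂, one_apply_eq_self] at h
  rw [hresidual, norm_smul, Real.norm_of_nonneg hα.le, div_mul_eq_mul_div,
    le_div_iff₀ (by positivity), mul_assoc, mul_comm ‖B e‖]
  gcongr
end

section
/- Let F : X → Y be a twice continuously Fréchet differentiable map between real Hilbert spaces whose second derivative satisfies ‖F''(x)‖ ≤ d₃ for all x ∈ X, let r̃ ∈ X satisfy F(r̃) = 0, set A := F'(r̃), and let α > 0. Then for every r ∈ X, ‖R_α(A)(A(r̃ − r) + F(r))‖ ≤ (d₃/(4√α)) ‖r̃ − r‖². -/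
/-!
Write `w := A (r̃ - r) + F r`. Since `F r̃ = 0`, `w` is the Taylor remainder
`F r - F r̃ - F'(r̃)(r - r̃)`, and a bound `d₃` on `F''` makes `F'` `d₃`-Lipschitz, so
`‖w‖ ≤ (d₃ / 2) ‖r - r̃‖²`. On the other side, `x := R_α(A) w` solves `α x + A*A x = A* w`;
pairing with `x` gives `α ‖x‖² + ‖A x‖² ≤ ‖w‖ ‖A x‖`, and `‖w‖ t - t² ≤ ‖w‖² / 4` yields
`‖R_α(A) w‖ ≤ ‖w‖ / (2 √α)`.
-/

open ContinuousLinearMap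

lemma le_div_two_sqrt_of_mul_sq_add_sq_le {α a c t : ℝ} (hα : 0 < α) (hc : 0 ≤ c)
    (h : α * a ^ 2 + t ^ 2 ≤ c * t) : a ≤ c / (2 * Real.sqrt α) := by
  have hs : 0 < Real.sqrt α := Real.sqrt_pos.2 hα
  have hαa : (2 * Real.sqrt α * a) ^ 2 ≤ c ^ 2 := by
    rw [mul_pow, mul_pow, Real.sq_sqrt hα.le]
    nlinarith [sq_nonneg (c - 2 * t)]
  rw [le_div_iff₀ (by positivity), mul_comm]
  exact (abs_le_of_sq_le_sq' hαa hc).2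

section RegularizedPseudoinverse

variable {X Y : Type*} [NormedAddCommGroup X] [InnerProductSpace ℝ X] [CompleteSpace X]
  [NormedAddCommGroup Y] [InnerProductSpace ℝ Y] [CompleteSpace Y]

lemma mul_norm_sq_add_norm_sq_le_of_smul_add_adjoint_eq {A : X →L[ℝ] Y} {α : ℝ} {x : X} {y : Y}
    (h : α • x + adjoint A (A x) = adjoint A y) :
    α * ‖x‖ ^ 2 + ‖A x‖ ^ 2 ≤ ‖y‖ * ‖A x‖ :=
  calc α * ‖x‖ ^ 2 + ‖A x‖ ^ 2 = inner ℝ (α • x + adjoint A (A x)) x := by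
        rw [inner_add_left, real_inner_smul_left, adjoint_inner_left,
          real_inner_self_eq_norm_sq, real_inner_self_eq_norm_sq]
    _ = inner ℝ y (A x) := by rw [h, adjoint_inner_left]
    _ ≤ ‖y‖ * ‖A x‖ := real_inner_le_norm _ _

lemma norm_apply_adjoint_le_of_comp_eq_one {A : X →L[ℝ] Y} {α : ℝ} (hα : 0 < α) {B : X →L[ℝ] X}
    (hB : (α • (1 : X →L[ℝ] X) + adjoint A ∘L A) ∘L B = 1) (y : Y) :
    ‖B (adjoint A y)‖ ≤ ‖y‖ / (2 * Real.sqrt α) := by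
  have hnormal : α • B (adjoint A y) + adjoint A (A (B (adjoint A y))) = adjoint A y := by
    simpa using congr($hB (adjoint A y))
  exact le_div_two_sqrt_of_mul_sq_add_sq_le hα (norm_nonneg y)
    (mul_norm_sq_add_norm_sq_le_of_smul_add_adjoint_eq hnormal)

end RegularizedPseudoinverse

section Taylor

variable {E F : Type*} [NormedAddCommGroup E] [NormedSpace ℝ E]
  [NormedAddCommGroup F] [NormedSpace ℝ F]

lemma norm_fderiv_sub_fderiv_le_of_norm_fderiv_fderiv_le {f : E → F} {C : ℝ}
    (hf : Differentiable ℝ (fderiv ℝ f)) (hC : ∀ x, ‖fderiv ℝ (fderiv ℝ f) x‖ ≤ C) (a b : E) :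
    ‖fderiv ℝ f a - fderiv ℝ f b‖ ≤ C * ‖a - b‖ :=
  convex_univ.norm_image_sub_le_of_norm_fderiv_le (fun x _ => hf x) (fun x _ => hC x)
    (Set.mem_univ b) (Set.mem_univ a)

lemma norm_sub_sub_fderiv_le_of_lipschitz_fderiv {f : E → F} {L : ℝ} (hf : Differentiable ℝ f)
    (hL : ∀ a b, ‖fderiv ℝ f a - fderiv ℝ f b‖ ≤ L * ‖a - b‖) (x y : E) :
    ‖f y - f x - fderiv ℝ f x (y - x)‖ ≤ L / 2 * ‖y - x‖ ^ 2 := by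
  set v := y - x
  let g : ℝ → F := fun t => f (x + t • v) - f x - t • fderiv ℝ f x v
  have hg : ∀ t : ℝ, HasDerivAt g (fderiv ℝ f (x + t • v) v - fderiv ℝ f x v) t := by
    intro t
    have hline : HasDerivAt (fun t : ℝ => x + t • v) v t := by
      simpa using ((hasDerivAt_id t).smul_const v).const_add x
    exact (((hf _).hasFDerivAt.comp_hasDerivAt t hline).sub_const (f x)).sub
      (by simpa using (hasDerivAt_id t).smul_const (fderiv ℝ f x v))
  have hg' : ∀ t ∈ Set.Ico (0 : ℝ) 1,
      ‖fderiv ℝ f (x + t • v) v - fderiv ℝ f x v‖ ≤ L * ‖v‖ ^ 2 * t := by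
    intro t ht
    calc ‖fderiv ℝ f (x + t • v) v - fderiv ℝ f x v‖
        ≤ ‖fderiv ℝ f (x + t • v) - fderiv ℝ f x‖ * ‖v‖ :=
          (fderiv ℝ f (x + t • v) - fderiv ℝ f x).le_opNorm v
      _ ≤ L * ‖x + t • v - x‖ * ‖v‖ := by gcongr; exact hL _ _
      _ = L * ‖v‖ ^ 2 * t := by
        rw [add_sub_cancel_left, norm_smul, Real.norm_of_nonneg ht.1]; ring
  have hbound : ∀ t : ℝ,
      HasDerivAt (fun t : ℝ => L * ‖v‖ ^ 2 * t ^ 2 / 2) (L * ‖v‖ ^ 2 * t) t := fun t =>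
    (((hasDerivAt_pow 2 t).const_mul (L * ‖v‖ ^ 2)).div_const 2).congr_deriv (by ring)
  have hg_one := image_norm_le_of_norm_deriv_right_le_deriv_boundary
    (fun t _ => (hg t).continuousAt.continuousWithinAt) (fun t _ => (hg t).hasDerivWithinAt)
    (by simp [g]) hbound hg' (Set.right_mem_Icc.2 zero_le_one)
  calc ‖f y - f x - fderiv ℝ f x v‖ = ‖g 1‖ := by simp [g, v]
    _ ≤ L * ‖v‖ ^ 2 * 1 ^ 2 / 2 := hg_one
    _ = L / 2 * ‖v‖ ^ 2 := by ring

end Taylor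

theorem stmt_5_general {X Y : Type*}
    [NormedAddCommGroup X] [InnerProductSpace ℝ X] [CompleteSpace X]
    [NormedAddCommGroup Y] [InnerProductSpace ℝ Y] [CompleteSpace Y]
    (F : X → Y) (hF : ContDiff ℝ 2 F)
    (d₃ : ℝ)
    (hF'' : ∀ x : X, ‖fderiv ℝ (fderiv ℝ F) x‖ ≤ d₃)
    (rt : X) (hrt : F rt = 0)
    (α : ℝ) (hα : 0 < α)
    (B : X →L[ℝ] X)
    (hB₂ : (α • (1 : X →L[ℝ] X) +
      ContinuousLinearMap.adjoint (fderiv ℝ F rt) ∘L fderiv ℝ F rt) ∘L B = 1) :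
    ∀ r : X, ‖(B ∘L ContinuousLinearMap.adjoint (fderiv ℝ F rt))
        (fderiv ℝ F rt (rt - r) + F r)‖ ≤
      d₃ / (4 * Real.sqrt α) * ‖rt - r‖ ^ 2 := by
  intro r
  have hlip := norm_fderiv_sub_fderiv_le_of_norm_fderiv_fderiv_le
    ((hF.fderiv_right (m := 1) le_rfl).differentiable one_ne_zero) hF''
  have htaylor := norm_sub_sub_fderiv_le_of_lipschitz_fderiv (hF.differentiable two_ne_zero)
    hlip rt r
  have hremainder : fderiv ℝ F rt (rt - r) + F r = F r - F rt - fderiv ℝ F rt (r - rt) := by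
    rw [hrt, ← neg_sub r rt, map_neg]; abel
  calc ‖B (adjoint (fderiv ℝ F rt) (fderiv ℝ F rt (rt - r) + F r))‖
      ≤ ‖fderiv ℝ F rt (rt - r) + F r‖ / (2 * Real.sqrt α) :=
        norm_apply_adjoint_le_of_comp_eq_one hα hB₂ _
    _ ≤ d₃ / 2 * ‖r - rt‖ ^ 2 / (2 * Real.sqrt α) := by
        rw [hremainder]; gcongr
    _ = d₃ / (4 * Real.sqrt α) * ‖rt - r‖ ^ 2 := by
        rw [norm_sub_rev]; field_simp; ring

/-- If `F : X → Y` is twice continuously Fréchet differentiable with `‖F''‖ ≤ d₃`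
everywhere, `F(r̃) = 0`, `A := F'(r̃)` and `α > 0`, then for every `r`,
`‖R_α(A)(A(r̃ − r) + F(r))‖ ≤ (d₃/(4√α)) ‖r̃ − r‖²`. -/
theorem stmt_5 {X Y : Type*}
    [NormedAddCommGroup X] [InnerProductSpace ℝ X] [CompleteSpace X]
    [NormedAddCommGroup Y] [InnerProductSpace ℝ Y] [CompleteSpace Y]
    (F : X → Y) (hF : ContDiff ℝ 2 F)
    (d₃ : ℝ) (hd₃ : 0 < d₃)
    (hF'' : ∀ x : X, ‖fderiv ℝ (fderiv ℝ F) x‖ ≤ d₃)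
    (rt : X) (hrt : F rt = 0)
    (α : ℝ) (hα : 0 < α)
    (B : X →L[ℝ] X)
    (hB₁ : B ∘L (α • (1 : X →L[ℝ] X) +
      ContinuousLinearMap.adjoint (fderiv ℝ F rt) ∘L fderiv ℝ F rt) = 1)
    (hB₂ : (α • (1 : X →L[ℝ] X) +
      ContinuousLinearMap.adjoint (fderiv ℝ F rt) ∘L fderiv ℝ F rt) ∘L B = 1) :
    ∀ r : X, ‖(B ∘L ContinuousLinearMap.adjoint (fderiv ℝ F rt))
        (fderiv ℝ F rt (rt - r) + F r)‖ ≤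
      d₃ / (4 * Real.sqrt α) * ‖rt - r‖ ^ 2 :=
  stmt_5_general F hF d₃ hF'' rt hrt α hα B hB₂
end

section
/- Let X and Y be real Hilbert spaces, A : X → Y a bounded linear operator, α > 0, and let G : ℝ → Y be differentiable on the interval [k, k'] (with k ≤ k') with ‖G'(s)‖ ≤ d₂ for all s ∈ [k, k']. Then ‖R_α(A)(G(k') − G(k))‖ ≤ (d₂/(2√α)) (k' − k). -/
open ContinuousLinearMap

/- `x = R_α(A) y` solves the normal equation `α x + A* A x = A* y`; pairing it with `x` gives
`α ‖x‖² + ‖A x‖² = ⟪y, A x⟫ ≤ ‖y‖ ‖A x‖ ≤ ‖A x‖² + ‖y‖² / 4`, so `4 α ‖x‖² ≤ ‖y‖²`, i.e.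
`‖R_α(A)‖ ≤ 1 / (2 √α)`. The mean value inequality bounds `‖G k' - G k‖` by `d₂ (k' - k)`. -/

section Tikhonov

variable {X Y : Type*}
    [NormedAddCommGroup X] [InnerProductSpace ℝ X] [CompleteSpace X]
    [NormedAddCommGroup Y] [InnerProductSpace ℝ Y] [CompleteSpace Y]

lemma inner_normalEquation_self (A : X →L[ℝ] Y) {α : ℝ} {x : X} {y : Y}
    (h : α • x + adjoint A (A x) = adjoint A y) :
    α * ‖x‖ ^ 2 + ‖A x‖ ^ 2 = inner ℝ y (A x) := by
  have hx := congrArg (fun z => (inner ℝ z x : ℝ)) h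
  simp only [inner_add_left, real_inner_smul_left, adjoint_inner_left,
    real_inner_self_eq_norm_sq] at hx
  exact hx

lemma two_mul_sqrt_mul_norm_le_of_normalEquation (A : X →L[ℝ] Y) {α : ℝ} (hα : 0 < α)
    {x : X} {y : Y} (h : α • x + adjoint A (A x) = adjoint A y) :
    2 * √α * ‖x‖ ≤ ‖y‖ := by
  have hcs : α * ‖x‖ ^ 2 + ‖A x‖ ^ 2 ≤ ‖y‖ * ‖A x‖ :=
    (inner_normalEquation_self A h).trans_le (real_inner_le_norm y (A x))
  have hsq : (2 * √α * ‖x‖) ^ 2 ≤ ‖y‖ ^ 2 := by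
    rw [mul_pow, mul_pow, Real.sq_sqrt hα.le]
    nlinarith [sq_nonneg (‖A x‖ - ‖y‖ / 2)]
  exact (sq_le_sq₀ (by positivity) (norm_nonneg y)).mp hsq

lemma norm_regularizedPseudoinverse_apply_le (A : X →L[ℝ] Y) {α : ℝ} (hα : 0 < α)
    {B : X →L[ℝ] X} (hB : (α • (1 : X →L[ℝ] X) + adjoint A ∘L A) ∘L B = 1) (y : Y) :
    ‖(B ∘L adjoint A) y‖ ≤ ‖y‖ / (2 * √α) := by
  have hnormal : α • B (adjoint A y) + adjoint A (A (B (adjoint A y))) = adjoint A y := by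
    simpa using congrArg (fun T : X →L[ℝ] X => T (adjoint A y)) hB
  rw [le_div_iff₀ (by positivity), mul_comm]
  exact two_mul_sqrt_mul_norm_le_of_normalEquation A hα hnormal

end Tikhonov

theorem stmt_6_general {X Y : Type*}
    [NormedAddCommGroup X] [InnerProductSpace ℝ X] [CompleteSpace X]
    [NormedAddCommGroup Y] [InnerProductSpace ℝ Y] [CompleteSpace Y]
    (A : X →L[ℝ] Y) (α : ℝ) (hα : 0 < α)
    (B : X →L[ℝ] X)
    (hB₂ : (α • (1 : X →L[ℝ] X) + ContinuousLinearMap.adjoint A ∘L A) ∘L B = 1)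
    (k k' : ℝ) (hkk' : k ≤ k')
    (G : ℝ → Y) (G' : ℝ → Y) (d₂ : ℝ)
    (hG : ∀ s ∈ Set.Icc k k', HasDerivWithinAt G (G' s) (Set.Icc k k') s)
    (hG' : ∀ s ∈ Set.Icc k k', ‖G' s‖ ≤ d₂) :
    ‖(B ∘L ContinuousLinearMap.adjoint A) (G k' - G k)‖ ≤
      d₂ / (2 * Real.sqrt α) * (k' - k) := by
  have hmvt : ‖G k' - G k‖ ≤ d₂ * (k' - k) := by
    simpa [Real.norm_eq_abs, abs_of_nonneg (sub_nonneg.mpr hkk')] using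
      (convex_Icc k k').norm_image_sub_le_of_norm_hasDerivWithin_le hG hG'
        (Set.left_mem_Icc.mpr hkk') (Set.right_mem_Icc.mpr hkk')
  calc ‖(B ∘L adjoint A) (G k' - G k)‖ ≤ ‖G k' - G k‖ / (2 * √α) :=
        norm_regularizedPseudoinverse_apply_le A hα hB₂ _
    _ ≤ d₂ * (k' - k) / (2 * √α) := by gcongr
    _ = d₂ / (2 * √α) * (k' - k) := by ring

/-- If `A : X → Y` is a bounded linear operator between real Hilbert spaces, `α > 0`,
and `G : ℝ → Y` is differentiable on `[k, k']` with `‖G'(s)‖ ≤ d₂` there, then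
`‖R_α(A)(G(k') − G(k))‖ ≤ (d₂/(2√α)) (k' − k)`. -/
theorem stmt_6 {X Y : Type*}
    [NormedAddCommGroup X] [InnerProductSpace ℝ X] [CompleteSpace X]
    [NormedAddCommGroup Y] [InnerProductSpace ℝ Y] [CompleteSpace Y]
    (A : X →L[ℝ] Y) (α : ℝ) (hα : 0 < α)
    (B : X →L[ℝ] X)
    (hB₁ : B ∘L (α • (1 : X →L[ℝ] X) + ContinuousLinearMap.adjoint A ∘L A) = 1)
    (hB₂ : (α • (1 : X →L[ℝ] X) + ContinuousLinearMap.adjoint A ∘L A) ∘L B = 1)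
    (k k' : ℝ) (hkk' : k ≤ k')
    (G : ℝ → Y) (G' : ℝ → Y) (d₂ : ℝ) (hd₂ : 0 < d₂)
    (hG : ∀ s ∈ Set.Icc k k', HasDerivWithinAt G (G' s) (Set.Icc k k') s)
    (hG' : ∀ s ∈ Set.Icc k k', ‖G' s‖ ≤ d₂) :
    ‖(B ∘L ContinuousLinearMap.adjoint A) (G k' - G k)‖ ≤
      d₂ / (2 * Real.sqrt α) * (k' - k) :=
  stmt_6_general A α hα B hB₂ k k' hkk' G G' d₂ hG hG'
end

section
/- Let X and Y be real Hilbert spaces and F : X × ℝ → Y a map which is Fréchet differentiable in its first variable, such that for all r₁, r₂, r ∈ X and k₁, k₂, k ∈ ℝ: ‖∂_rF(r₁,k) − ∂_rF(r₂,k)‖ ≤ d₃‖r₁ − r₂‖, ‖∂_rF(r,k₁) − ∂_rF(r,k₂)‖ ≤ d₄|k₁ − k₂|, and ‖F(r₁,k) − F(r₂,k)‖ ≤ d₁‖r₁ − r₂‖. Let r̃ ∈ X and k ∈ ℝ satisfy F(r̃,k) = 0, and let α > 0. Then for every r ∈ X and k' ∈ ℝ, ‖(R_α(∂_rF(r,k'))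 − R_α(∂_rF(r̃,k))) F(r,k)‖ ≤ (9d₁/(4α)) (d₄|k' − k| + d₃‖r̃ − r‖) ‖r̃ − r‖. -/
/-!
Write `T_A = αI + A*A`, so that `⟪T_A x, x⟫ = α‖x‖² + ‖A x‖²`. If `T_A x = z` then
`α‖x‖ ≤ ‖z‖`, and if `T_A x = A* y` then `‖A x‖ ≤ ‖y‖` and `2√α ‖x‖ ≤ ‖y‖`.
For `w = R_α(Ã) v` the difference `R_α(A) v - w` is `T_A⁻¹` applied to
`(A - Ã)* v + (Ã - A)* Ã w + A* (Ã - A) w`, and these bounds make the three pieces at most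
`δ‖v‖/α`, `δ‖v‖/α` and `δ‖v‖/(4α)` with `δ = ‖A - Ã‖`. For `A = ∂_rF(r,k')`, `Ã = ∂_rF(r̃,k)`
the Lipschitz bounds give `δ ≤ d₄|k' - k| + d₃‖r̃ - r‖`, and `F(r̃,k) = 0` gives
`‖F(r,k)‖ ≤ d₁‖r̃ - r‖`.
-/

open ContinuousLinearMap

section Tikhonov

variable {X Y : Type*}
  [NormedAddCommGroup X] [InnerProductSpace ℝ X] [CompleteSpace X]
  [NormedAddCommGroup Y] [InnerProductSpace ℝ Y] [CompleteSpace Y]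

noncomputable def tikhonovOp (α : ℝ) (A : X →L[ℝ] Y) : X →L[ℝ] X := α • 1 + adjoint A ∘L A

@[simp]
lemma tikhonovOp_apply (α : ℝ) (A : X →L[ℝ] Y) (x : X) :
    tikhonovOp α A x = α • x + adjoint A (A x) := rfl

lemma inner_tikhonovOp_apply_self (α : ℝ) (A : X →L[ℝ] Y) (x : X) :
    inner ℝ (tikhonovOp α A x) x = α * ‖x‖ ^ 2 + ‖A x‖ ^ 2 := by
  rw [tikhonovOp_apply, inner_add_left, real_inner_smul_left, adjoint_inner_left,
    real_inner_self_eq_norm_sq, real_inner_self_eq_norm_sq]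

variable {α : ℝ} {A : X →L[ℝ] Y}

lemma mul_norm_le_of_tikhonovOp_apply_eq {x z : X} (hx : tikhonovOp α A x = z) :
    α * ‖x‖ ≤ ‖z‖ := by
  have h := inner_tikhonovOp_apply_self α A x
  rw [hx] at h
  have hzx := real_inner_le_norm z x
  rcases (norm_nonneg x).eq_or_lt with h0 | h0
  · rw [← h0, mul_zero]; exact norm_nonneg z
  · nlinarith [sq_nonneg ‖A x‖]

lemma norm_apply_le_of_tikhonovOp_apply_eq_adjoint (hα : 0 ≤ α) {x : X} {y : Y}
    (hx : tikhonovOp α A x = adjoint A y) : ‖A x‖ ≤ ‖y‖ := by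
  have h := inner_tikhonovOp_apply_self α A x
  rw [hx, adjoint_inner_left] at h
  have hyAx := real_inner_le_norm y (A x)
  rcases (norm_nonneg (A x)).eq_or_lt with h0 | h0
  · rw [← h0]; exact norm_nonneg y
  · nlinarith [mul_nonneg hα (sq_nonneg ‖x‖)]

lemma two_mul_sqrt_mul_norm_le_of_tikhonovOp_apply_eq_adjoint (hα : 0 ≤ α) {x : X} {y : Y}
    (hx : tikhonovOp α A x = adjoint A y) : 2 * √α * ‖x‖ ≤ ‖y‖ := by
  have h := inner_tikhonovOp_apply_self α A x
  rw [hx, adjoint_inner_left] at h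
  have hyAx := real_inner_le_norm y (A x)
  rw [← sq_le_sq₀ (by positivity) (norm_nonneg y), mul_pow, mul_pow, Real.sq_sqrt hα]
  -- AM-GM: `‖y‖ ‖A x‖ - ‖A x‖² ≤ ‖y‖² / 4`
  nlinarith [sq_nonneg (‖y‖ - 2 * ‖A x‖)]

lemma tikhonov_inverse_apply_sub_eq {Ã : X →L[ℝ] Y} {B : X →L[ℝ] X}
    (hB : B ∘L tikhonovOp α A = 1) {v : Y} {w : X} (hw : tikhonovOp α Ã w = adjoint Ã v) :
    B (adjoint A v) - w =
      B (adjoint (A - Ã) v) + B (adjoint (Ã - A) (Ã w)) + B (adjoint A ((Ã - A) w)) := by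
  have hBw : B (tikhonovOp α A w) = w := by simpa using congr($hB w)
  conv_lhs => rw [← hBw]
  rw [← map_sub, ← map_add, ← map_add]
  congr 1
  simp only [tikhonovOp_apply, map_sub, sub_apply]
  rw [← hw, tikhonovOp_apply]
  abel

lemma norm_adjoint_sub_apply_le (A Ã : X →L[ℝ] Y) (y : Y) :
    ‖adjoint (A - Ã) y‖ ≤ ‖A - Ã‖ * ‖y‖ := by
  simpa only [LinearIsometryEquiv.norm_map] using (adjoint (A - Ã)).le_opNorm y

lemma norm_tikhonov_inverse_sub_apply_le (hα : 0 < α) {Ã : X →L[ℝ] Y} {B Bt : X →L[ℝ] X}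
    (hB₁ : B ∘L tikhonovOp α A = 1) (hB₂ : tikhonovOp α A ∘L B = 1)
    (hBt : tikhonovOp α Ã ∘L Bt = 1) (v : Y) :
    ‖(B ∘L adjoint A - Bt ∘L adjoint Ã) v‖ ≤ 9 / (4 * α) * (‖A - Ã‖ * ‖v‖) := by
  have hB : ∀ z, tikhonovOp α A (B z) = z := fun z => by simpa using congr($hB₂ z)
  set δ := ‖A - Ã‖
  set w := Bt (adjoint Ã v)
  have hw : tikhonovOp α Ã w = adjoint Ã v := by simpa using congr($hBt (adjoint Ã v))
  have hÃw : ‖Ã w‖ ≤ ‖v‖ := norm_apply_le_of_tikhonovOp_apply_eq_adjoint hα.le hw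
  have hw' : 2 * √α * ‖w‖ ≤ ‖v‖ :=
    two_mul_sqrt_mul_norm_le_of_tikhonovOp_apply_eq_adjoint hα.le hw
  have h₁ : α * ‖B (adjoint (A - Ã) v)‖ ≤ δ * ‖v‖ :=
    (mul_norm_le_of_tikhonovOp_apply_eq (hB _)).trans (norm_adjoint_sub_apply_le A Ã v)
  have h₂ : α * ‖B (adjoint (Ã - A) (Ã w))‖ ≤ δ * ‖v‖ :=
    calc α * ‖B (adjoint (Ã - A) (Ã w))‖ ≤ ‖Ã - A‖ * ‖Ã w‖ :=
          (mul_norm_le_of_tikhonovOp_apply_eq (hB _)).trans (norm_adjoint_sub_apply_le Ã A _)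
      _ ≤ δ * ‖v‖ := by rw [norm_sub_rev]; gcongr
  have h₃ : 4 * α * ‖B (adjoint A ((Ã - A) w))‖ ≤ δ * ‖v‖ := by
    have h := two_mul_sqrt_mul_norm_le_of_tikhonovOp_apply_eq_adjoint hα.le (hB (adjoint A ((Ã - A) w)))
    have hÃAw : ‖(Ã - A) w‖ ≤ δ * ‖w‖ := by
      simpa only [norm_sub_rev Ã A] using (Ã - A).le_opNorm w
    calc 4 * α * ‖B (adjoint A ((Ã - A) w))‖
        = 2 * √α * (2 * √α * ‖B (adjoint A ((Ã - A) w))‖) := by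
          linear_combination (-4 * ‖B (adjoint A ((Ã - A) w))‖) * Real.mul_self_sqrt hα.le
      _ ≤ 2 * √α * (δ * ‖w‖) := by gcongr 2 * √α * ?_; exact h.trans hÃAw
      _ = δ * (2 * √α * ‖w‖) := by ring
      _ ≤ δ * ‖v‖ := by gcongr
  calc ‖(B ∘L adjoint A - Bt ∘L adjoint Ã) v‖
      = ‖B (adjoint (A - Ã) v) + B (adjoint (Ã - A) (Ã w)) + B (adjoint A ((Ã - A) w))‖ := by
        rw [sub_apply, comp_apply, comp_apply, tikhonov_inverse_apply_sub_eq hB₁ hw]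
    _ ≤ ‖B (adjoint (A - Ã) v)‖ + ‖B (adjoint (Ã - A) (Ã w))‖ + ‖B (adjoint A ((Ã - A) w))‖ :=
        norm_add₃_le
    _ ≤ δ * ‖v‖ / α + δ * ‖v‖ / α + δ * ‖v‖ / (4 * α) := by
        gcongr
        · rw [le_div_iff₀ hα, mul_comm]; exact h₁
        · rw [le_div_iff₀ hα, mul_comm]; exact h₂
        · rw [le_div_iff₀ (by positivity), mul_comm]; exact h₃
    _ = 9 / (4 * α) * (δ * ‖v‖) := by field_simp; ring

end Tikhonov

theorem stmt_7_general {X Y : Type*}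
    [NormedAddCommGroup X] [InnerProductSpace ℝ X] [CompleteSpace X]
    [NormedAddCommGroup Y] [InnerProductSpace ℝ Y] [CompleteSpace Y]
    (F : X × ℝ → Y) (DF : X → ℝ → (X →L[ℝ] Y))
    (d₁ d₃ d₄ : ℝ)
    (hLipr : ∀ (r₁ r₂ : X) (κ : ℝ), ‖DF r₁ κ - DF r₂ κ‖ ≤ d₃ * ‖r₁ - r₂‖)
    (hLipk : ∀ (r : X) (κ₁ κ₂ : ℝ), ‖DF r κ₁ - DF r κ₂‖ ≤ d₄ * |κ₁ - κ₂|)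
    (hLipF : ∀ (r₁ r₂ : X) (κ : ℝ), ‖F (r₁, κ) - F (r₂, κ)‖ ≤ d₁ * ‖r₁ - r₂‖)
    (rt : X) (k : ℝ) (hrt : F (rt, k) = 0)
    (α : ℝ) (hα : 0 < α)
    (r : X) (k' : ℝ)
    (B Bt : X →L[ℝ] X)
    (hB₁ : B ∘L (α • (1 : X →L[ℝ] X) +
      ContinuousLinearMap.adjoint (DF r k') ∘L DF r k') = 1)
    (hB₂ : (α • (1 : X →L[ℝ] X) +
      ContinuousLinearMap.adjoint (DF r k') ∘L DF r k') ∘L B = 1)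
    (hBt₂ : (α • (1 : X →L[ℝ] X) +
      ContinuousLinearMap.adjoint (DF rt k) ∘L DF rt k) ∘L Bt = 1) :
    ‖(B ∘L ContinuousLinearMap.adjoint (DF r k') -
        Bt ∘L ContinuousLinearMap.adjoint (DF rt k)) (F (r, k))‖ ≤
      9 * d₁ / (4 * α) * (d₄ * |k' - k| + d₃ * ‖rt - r‖) * ‖rt - r‖ := by
  have hDF : ‖DF r k' - DF rt k‖ ≤ d₄ * |k' - k| + d₃ * ‖rt - r‖ :=
    calc ‖DF r k' - DF rt k‖ ≤ ‖DF r k' - DF r k‖ + ‖DF r k - DF rt k‖ :=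
          norm_sub_le_norm_sub_add_norm_sub _ _ _
      _ ≤ d₄ * |k' - k| + d₃ * ‖rt - r‖ := by
          rw [norm_sub_rev rt r]; exact add_le_add (hLipk r k' k) (hLipr r rt k)
  have hF : ‖F (r, k)‖ ≤ d₁ * ‖rt - r‖ := by
    simpa only [hrt, sub_zero, norm_sub_rev rt r] using hLipF r rt k
  calc _ ≤ 9 / (4 * α) * (‖DF r k' - DF rt k‖ * ‖F (r, k)‖) :=
        norm_tikhonov_inverse_sub_apply_le hα hB₁ hB₂ hBt₂ _
    _ ≤ 9 / (4 * α) * ((d₄ * |k' - k| + d₃ * ‖rt - r‖) * (d₁ * ‖rt - r‖)) := by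
        gcongr 9 / (4 * α) * ?_
        exact mul_le_mul hDF hF (norm_nonneg _) ((norm_nonneg _).trans hDF)
    _ = 9 * d₁ / (4 * α) * (d₄ * |k' - k| + d₃ * ‖rt - r‖) * ‖rt - r‖ := by ring

/-- Perturbation bound for the regularized pseudoinverse applied to the data misfit:
if `F : X × ℝ → Y` is differentiable in its first variable with the stated Lipschitz
bounds, `F(r̃,k) = 0` and `α > 0`, then for every `r ∈ X` and `k' ∈ ℝ`,
`‖(R_α(∂_rF(r,k')) − R_α(∂_rF(r̃,k))) F(r,k)‖ ≤ (9d₁/(4α))(d₄|k' − k| + d₃‖r̃ − r‖)‖r̃ − r‖`. -/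
theorem stmt_7 {X Y : Type*}
    [NormedAddCommGroup X] [InnerProductSpace ℝ X] [CompleteSpace X]
    [NormedAddCommGroup Y] [InnerProductSpace ℝ Y] [CompleteSpace Y]
    (F : X × ℝ → Y) (DF : X → ℝ → (X →L[ℝ] Y))
    (hDF : ∀ (r : X) (κ : ℝ), HasFDerivAt (fun r' => F (r', κ)) (DF r κ) r)
    (d₁ d₃ d₄ : ℝ) (hd₁ : 0 < d₁) (hd₃ : 0 < d₃) (hd₄ : 0 < d₄)
    (hLipr : ∀ (r₁ r₂ : X) (κ : ℝ), ‖DF r₁ κ - DF r₂ κ‖ ≤ d₃ * ‖r₁ - r₂‖)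
    (hLipk : ∀ (r : X) (κ₁ κ₂ : ℝ), ‖DF r κ₁ - DF r κ₂‖ ≤ d₄ * |κ₁ - κ₂|)
    (hLipF : ∀ (r₁ r₂ : X) (κ : ℝ), ‖F (r₁, κ) - F (r₂, κ)‖ ≤ d₁ * ‖r₁ - r₂‖)
    (rt : X) (k : ℝ) (hrt : F (rt, k) = 0)
    (α : ℝ) (hα : 0 < α)
    (r : X) (k' : ℝ)
    (B Bt : X →L[ℝ] X)
    (hB₁ : B ∘L (α • (1 : X →L[ℝ] X) +
      ContinuousLinearMap.adjoint (DF r k') ∘L DF r k') = 1)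
    (hB₂ : (α • (1 : X →L[ℝ] X) +
      ContinuousLinearMap.adjoint (DF r k') ∘L DF r k') ∘L B = 1)
    (hBt₁ : Bt ∘L (α • (1 : X →L[ℝ] X) +
      ContinuousLinearMap.adjoint (DF rt k) ∘L DF rt k) = 1)
    (hBt₂ : (α • (1 : X →L[ℝ] X) +
      ContinuousLinearMap.adjoint (DF rt k) ∘L DF rt k) ∘L Bt = 1) :
    ‖(B ∘L ContinuousLinearMap.adjoint (DF r k') -
        Bt ∘L ContinuousLinearMap.adjoint (DF rt k)) (F (r, k))‖ ≤
      9 * d₁ / (4 * α) * (d₄ * |k' - k| + d₃ * ‖rt - r‖) * ‖rt - r‖ :=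
  stmt_7_general F DF d₁ d₃ d₄ hLipr hLipk hLipF rt k hrt α hα r k' B Bt hB₁ hB₂ hBt₂
end

section
/- Noisy error estimate for the first Newton step after a frequency increment: let X and Y be real Hilbert spaces and F : X × ℝ → Y twice continuously Fréchet differentiable with ‖∂_rF(r,k)‖ ≤ d₁, ‖∂_kF(r,k)‖ ≤ d₂, ‖∂²_{rr}F(r,k)‖ ≤ d₃ and ‖∂²_{kr}F(r,k)‖ ≤ d₄ for all (r,k). Let X' ⊆ X be a closed subspace with orthogonal projection P; let k ≤ k' be reals with Δk := k' − k; let r̃, r̃' ∈ X' satisfy F(r̃, k) = 0, F(r̃', k') = 0 and ‖r̃' − r̃‖ ≤ d₀Δk for some d₀ > 0; let σ ≥ 0 satisfy ‖∂_rF(r̃, k)x‖ ≥ σ‖x‖ for all x ∈ X; let α > 0, let f ∈ Y with ‖f‖ ≤ δ̃, let r ∈ X', and define r⁺ := r − P R_α(∂_rF(r, k')) (F(r, k') + f). Then ‖r̃' − r⁺‖ ≤ Δk (d₀ + d₂/(2√α)) + δ̃/(2√α) + (α/(α + σ²)) ‖r̃ − r‖ + (9d₁d₄/(4α)) Δk ‖r̃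 − r‖ + (9d₁d₃/(4α) + d₃/(4√α)) ‖r̃ − r‖². -/
/-!
Write `e = r̃ - r` and `A = ∂_rF(r, k')`. Since `R_α(A) A e = e - α (α + A*A)⁻¹ e` and `P e = e`,
the error splits as `r̃' - r⁺ = (r̃' - r̃) + α P (α + A*A)⁻¹ e + P R_α(A) (F(r, k') + f + A e)`.
The argument of the last term is `F(r̃, k') + f` minus a Taylor remainder, of norm at most
`d₂ Δk + δ̃ + d₃ ‖e‖² / 2`, and `‖R_α(A)‖ ≤ 1 / (2√α)`. For the middle term, `A` lies within
`ε = d₃ ‖e‖ + d₄ Δk` of `∂_rF(r̃, k)`, so it is bounded below by `(σ - ε)₊`, which gives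
`α ‖(α + A*A)⁻¹ e‖ ≤ α / (α + (σ - ε)₊²) ‖e‖ ≤ (α / (α + σ²) + 2 σ ε / α) ‖e‖`,
and `σ ‖e‖ ≤ ‖∂_rF(r̃, k) e‖ ≤ d₁ ‖e‖`.
-/

open ContinuousLinearMap InnerProductSpace Set

section Tikhonov

variable {X Y : Type*}
  [NormedAddCommGroup X] [InnerProductSpace ℝ X] [CompleteSpace X]
  [NormedAddCommGroup Y] [InnerProductSpace ℝ Y] [CompleteSpace Y]
  (A : X →L[ℝ] Y) {B : X →L[ℝ] X} {α : ℝ}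

lemma inner_smul_one_add_adjoint_comp_self_apply (x : X) :
    ⟪(α • (1 : X →L[ℝ] X) + adjoint A ∘L A) x, x⟫_ℝ = α * ‖x‖ ^ 2 + ‖A x‖ ^ 2 := by
  simp only [add_apply, smul_apply, one_def, id_apply, comp_apply, inner_add_left,
    real_inner_smul_left, adjoint_inner_left, real_inner_self_eq_norm_sq]

lemma norm_apply_adjoint_le (hα : 0 < α)
    (hB : (α • (1 : X →L[ℝ] X) + adjoint A ∘L A) ∘L B = 1) (y : Y) :
    ‖B (adjoint A y)‖ ≤ ‖y‖ / (2 * √α) := by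
  set x := B (adjoint A y)
  have hx : α * ‖x‖ ^ 2 + ‖A x‖ ^ 2 = ⟪y, A x⟫_ℝ := by
    rw [← inner_smul_one_add_adjoint_comp_self_apply, ← comp_apply, hB, one_def, id_apply,
      adjoint_inner_left]
  -- `⟪y, A x⟫ ≤ ‖y‖ ‖A x‖ ≤ ‖y‖² / 4 + ‖A x‖²`, so `α ‖x‖² ≤ ‖y‖² / 4`.
  have hsq : ‖x‖ ^ 2 ≤ (‖y‖ / (2 * √α)) ^ 2 := by
    rw [div_pow, mul_pow, Real.sq_sqrt hα.le, le_div_iff₀ (by positivity)]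
    nlinarith [real_inner_le_norm y (A x), sq_nonneg (‖y‖ - 2 * ‖A x‖)]
  exact (pow_le_pow_iff_left₀ (norm_nonneg _) (by positivity) two_ne_zero).1 hsq

lemma mul_norm_apply_le_of_le_norm_apply
    (hB : (α • (1 : X →L[ℝ] X) + adjoint A ∘L A) ∘L B = 1)
    {s : ℝ} (hs : 0 ≤ s) (hA : ∀ x, s * ‖x‖ ≤ ‖A x‖) (e : X) :
    (α + s ^ 2) * ‖B e‖ ≤ ‖e‖ := by
  set x := B e
  have hx : α * ‖x‖ ^ 2 + ‖A x‖ ^ 2 = ⟪e, x⟫_ℝ := by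
    rw [← inner_smul_one_add_adjoint_comp_self_apply, ← comp_apply, hB, one_def, id_apply]
  have hsx : (s * ‖x‖) ^ 2 ≤ ‖A x‖ ^ 2 := pow_le_pow_left₀ (by positivity) (hA x) 2
  rcases (norm_nonneg x).eq_or_lt with hx0 | hx0
  · simp [← hx0]
  · refine le_of_mul_le_mul_right ?_ hx0
    nlinarith [real_inner_le_norm e x]

end Tikhonov

lemma sub_mul_norm_le_norm_apply_of_norm_sub_le {X Y : Type*}
    [NormedAddCommGroup X] [NormedSpace ℝ X] [NormedAddCommGroup Y] [NormedSpace ℝ Y]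
    {A A₀ : X →L[ℝ] Y} {σ ε : ℝ} (hA₀ : ∀ x, σ * ‖x‖ ≤ ‖A₀ x‖) (hAA₀ : ‖A - A₀‖ ≤ ε) (x : X) :
    (σ - ε) * ‖x‖ ≤ ‖A x‖ := by
  have h : ‖A₀ x‖ ≤ ‖A x‖ + ε * ‖x‖ :=
    calc ‖A₀ x‖ ≤ ‖A x‖ + ‖(A - A₀) x‖ := by
          simpa [sub_apply] using norm_sub_le (A x) ((A - A₀) x)
      _ ≤ ‖A x‖ + ε * ‖x‖ := by gcongr; exact (le_opNorm _ _).trans (by gcongr)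
  linarith [hA₀ x]

lemma div_add_max_sub_sq_le {α σ ε : ℝ} (hα : 0 < α) (hσ : 0 ≤ σ) (hε : 0 ≤ ε) :
    α / (α + max (σ - ε) 0 ^ 2) ≤ α / (α + σ ^ 2) + 2 * σ * ε / α := by
  set s := max (σ - ε) 0
  have hs : σ ^ 2 - 2 * σ * ε ≤ s ^ 2 := by
    rcases le_total σ ε with h | h
    · nlinarith [sq_nonneg s]
    · rw [show s = σ - ε from max_eq_left (by linarith)]; nlinarith
  rw [div_add_div _ _ (by positivity) hα.ne', div_le_div_iff₀ (by positivity) (by positivity)]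
  nlinarith [mul_nonneg (mul_nonneg hσ hε) (mul_nonneg hα.le (sq_nonneg s)),
    mul_nonneg (mul_nonneg hσ hε) (mul_nonneg hα.le (sq_nonneg σ)),
    mul_nonneg (mul_nonneg hσ hε) (mul_nonneg (sq_nonneg s) (sq_nonneg σ)),
    mul_le_mul_of_nonneg_left hs (mul_pos hα hα).le]

section Perturbation

variable {X Y : Type*}
  [NormedAddCommGroup X] [InnerProductSpace ℝ X] [CompleteSpace X]
  [NormedAddCommGroup Y] [InnerProductSpace ℝ Y] [CompleteSpace Y]

lemma mul_norm_apply_le_of_norm_sub_le {A A₀ : X →L[ℝ] Y} {B : X →L[ℝ] X} {α σ ε : ℝ}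
    (hα : 0 < α) (hB : (α • (1 : X →L[ℝ] X) + adjoint A ∘L A) ∘L B = 1)
    (hσ : 0 ≤ σ) (hA₀ : ∀ x, σ * ‖x‖ ≤ ‖A₀ x‖) (hAA₀ : ‖A - A₀‖ ≤ ε) (e : X) :
    α * ‖B e‖ ≤ α / (α + σ ^ 2) * ‖e‖ + 2 * ‖A₀‖ * ε / α * ‖e‖ := by
  have hε : 0 ≤ ε := (norm_nonneg _).trans hAA₀
  have hA : ∀ x, max (σ - ε) 0 * ‖x‖ ≤ ‖A x‖ := fun x => by
    rw [max_mul_of_nonneg _ _ (norm_nonneg x), zero_mul]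
    exact max_le (sub_mul_norm_le_norm_apply_of_norm_sub_le hA₀ hAA₀ x) (norm_nonneg _)
  have hBe := mul_norm_apply_le_of_le_norm_apply A hB (le_max_right _ _) hA e
  have hσA₀ : σ * ‖e‖ ≤ ‖A₀‖ * ‖e‖ := (hA₀ e).trans (le_opNorm _ _)
  calc α * ‖B e‖ ≤ α / (α + max (σ - ε) 0 ^ 2) * ‖e‖ := by
        rw [div_mul_eq_mul_div, le_div_iff₀ (by positivity)]
        nlinarith [mul_le_mul_of_nonneg_left hBe hα.le]
    _ ≤ (α / (α + σ ^ 2) + 2 * σ * ε / α) * ‖e‖ := by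
        gcongr; exact div_add_max_sub_sq_le hα hσ hε
    _ = α / (α + σ ^ 2) * ‖e‖ + 2 * ε / α * (σ * ‖e‖) := by ring
    _ ≤ α / (α + σ ^ 2) * ‖e‖ + 2 * ε / α * (‖A₀‖ * ‖e‖) := by gcongr
    _ = _ := by ring

end Perturbation

section Projection

variable {X : Type*} [NormedAddCommGroup X] [InnerProductSpace ℝ X] {K : Submodule ℝ X}

lemma norm_le_norm_of_mem_of_sub_mem_orthogonal {u x : X} (hu : u ∈ K) (hxu : x - u ∈ Kᗮ) :
    ‖u‖ ≤ ‖x‖ := by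
  have hx : ‖x‖ * ‖x‖ = ‖u‖ * ‖u‖ + ‖x - u‖ * ‖x - u‖ := by
    rw [← norm_add_sq_eq_norm_sq_add_norm_sq_real (K.inner_right_of_mem_orthogonal hu hxu),
      add_sub_cancel]
  nlinarith [norm_nonneg u, norm_nonneg x, mul_self_nonneg ‖x - u‖]

lemma eq_of_mem_of_sub_mem_orthogonal {u x : X} (hx : x ∈ K) (hu : u ∈ K) (hxu : x - u ∈ Kᗮ) :
    u = x :=
  (sub_eq_zero.1 <| (Submodule.mem_bot ℝ).1 <|
    K.inf_orthogonal_eq_bot.le ⟨K.sub_mem hx hu, hxu⟩).symm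

end Projection

section NewtonStep

variable {X Y : Type*}
  [NormedAddCommGroup X] [InnerProductSpace ℝ X] [CompleteSpace X]
  [NormedAddCommGroup Y] [InnerProductSpace ℝ Y] [CompleteSpace Y]

lemma norm_sub_projected_step_le {A : X →L[ℝ] Y} {B P : X →L[ℝ] X} {K : Submodule ℝ X} {α : ℝ}
    (hα : 0 < α)
    (hB₁ : B ∘L (α • (1 : X →L[ℝ] X) + adjoint A ∘L A) = 1)
    (hB₂ : (α • (1 : X →L[ℝ] X) + adjoint A ∘L A) ∘L B = 1)
    (hP : ∀ x, P x ∈ K ∧ x - P x ∈ Kᗮ) {r rt : X} (he : rt - r ∈ K) (rt' : X) (w : Y) :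
    ‖rt' - (r - P (B (adjoint A w)))‖ ≤
      ‖rt' - rt‖ + α * ‖B (rt - r)‖ + ‖w + A (rt - r)‖ / (2 * √α) := by
  set e := rt - r
  have hBAe : B (adjoint A (A e)) = e - α • B e := by
    rw [eq_sub_iff_add_eq', ← map_smul, ← map_add]; exact congr($hB₁ e)
  have hPe : P e = e := eq_of_mem_of_sub_mem_orthogonal he (hP e).1 (hP e).2
  have hP_le : ∀ x, ‖P x‖ ≤ ‖x‖ := fun x =>
    norm_le_norm_of_mem_of_sub_mem_orthogonal (hP x).1 (hP x).2
  have hsplit : rt' - (r - P (B (adjoint A w))) =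
      (rt' - rt) + α • P (B e) + P (B (adjoint A (w + A e))) := by
    rw [map_add, map_add, map_add, hBAe, map_sub P, hPe, map_smul P]
    simp only [e]; abel
  rw [hsplit]
  refine (norm_add₃_le).trans (add_le_add (add_le_add le_rfl ?_) ?_)
  · rw [norm_smul, Real.norm_of_nonneg hα.le]; gcongr; exact hP_le _
  · exact (hP_le _).trans (norm_apply_adjoint_le A hα hB₂ _)

end NewtonStep

lemma norm_sub_sub_fderiv_apply_le {E G : Type*}
    [NormedAddCommGroup E] [NormedSpace ℝ E] [NormedAddCommGroup G] [NormedSpace ℝ G]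
    {g : E → G} (hg : Differentiable ℝ g) {L : ℝ} {x : E}
    (hL : ∀ y, ‖fderiv ℝ g y - fderiv ℝ g x‖ ≤ L * ‖y - x‖) (h : E) :
    ‖g (x + h) - g x - fderiv ℝ g x h‖ ≤ L / 2 * ‖h‖ ^ 2 := by
  set ψ : ℝ → G := fun t => g (x + t • h) - g x - t • fderiv ℝ g x h
  have hψ : ∀ t, HasDerivAt ψ (fderiv ℝ g (x + t • h) h - fderiv ℝ g x h) t := by
    intro t
    have hline : HasDerivAt (fun t : ℝ => x + t • h) h t := by
      simpa using ((hasDerivAt_id t).smul_const h).const_add x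
    exact (((hg _).hasFDerivAt.comp_hasDerivAt t hline).sub_const (g x)).sub
      (by simpa using (hasDerivAt_id t).smul_const (fderiv ℝ g x h))
  have hbound : ∀ t ∈ Ico (0 : ℝ) 1,
      ‖fderiv ℝ g (x + t • h) h - fderiv ℝ g x h‖ ≤ L * ‖h‖ ^ 2 * t := by
    rintro t ⟨ht, -⟩
    calc ‖fderiv ℝ g (x + t • h) h - fderiv ℝ g x h‖
        ≤ ‖fderiv ℝ g (x + t • h) - fderiv ℝ g x‖ * ‖h‖ := by
          rw [← sub_apply]; exact le_opNorm _ _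
      _ ≤ L * ‖t • h‖ * ‖h‖ := by gcongr; simpa using hL (x + t • h)
      _ = L * ‖h‖ ^ 2 * t := by rw [norm_smul, Real.norm_of_nonneg ht]; ring
  have hB : ∀ t, HasDerivAt (fun t => L * ‖h‖ ^ 2 * (t ^ 2 / 2)) (L * ‖h‖ ^ 2 * t) t := by
    intro t
    simpa using ((hasDerivAt_pow 2 t).div_const 2).const_mul (L * ‖h‖ ^ 2)
  calc ‖g (x + h) - g x - fderiv ℝ g x h‖ = ‖ψ 1‖ := by simp [ψ]
    _ ≤ L * ‖h‖ ^ 2 * (1 ^ 2 / 2) := image_norm_le_of_norm_deriv_right_le_deriv_boundary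
        (fun t _ => (hψ t).continuousAt.continuousWithinAt) (fun t _ => (hψ t).hasDerivWithinAt)
        (by simp [ψ]) hB hbound (right_mem_Icc.2 zero_le_one)
    _ = L / 2 * ‖h‖ ^ 2 := by ring

section Partial

variable {X Y : Type*} [NormedAddCommGroup X] [NormedSpace ℝ X]
  [NormedAddCommGroup Y] [NormedSpace ℝ Y] {F : X × ℝ → Y}

lemma fderiv_fst_eq (hF : Differentiable ℝ F) (x : X) (κ : ℝ) :
    fderiv ℝ (fun x' => F (x', κ)) x = fderiv ℝ F (x, κ) ∘L inl ℝ X ℝ :=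
  ((hF _).hasFDerivAt.comp x (hasFDerivAt_prodMk_left x κ)).fderiv

lemma differentiable_fderiv_fst (hF : ContDiff ℝ 2 F) :
    Differentiable ℝ fun p : X × ℝ => fderiv ℝ (fun x => F (x, p.2)) p.1 := by
  simp_rw [fderiv_fst_eq (hF.differentiable two_ne_zero)]
  exact ((hF.fderiv_right (m := 1) le_rfl).differentiable one_ne_zero).clm_comp
    (differentiable_const _)

lemma norm_sub_le_of_norm_deriv_snd_le (hF : Differentiable ℝ F) (x : X) {C : ℝ}
    (hC : ∀ κ, ‖deriv (fun κ' => F (x, κ')) κ‖ ≤ C) {k k' : ℝ} (hk : k ≤ k') :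
    ‖F (x, k') - F (x, k)‖ ≤ C * (k' - k) := by
  have := Convex.norm_image_sub_le_of_norm_deriv_le
    (fun κ _ => (hF.comp (differentiable_const x |>.prodMk differentiable_id)).differentiableAt)
    (fun κ _ => hC κ) convex_univ (mem_univ k) (mem_univ k')
  rwa [Real.norm_of_nonneg (sub_nonneg.2 hk)] at this

lemma norm_fderiv_fst_sub_le (hF : ContDiff ℝ 2 F) {κ C : ℝ}
    (hC : ∀ x, ‖fderiv ℝ (fun x' => fderiv ℝ (fun x'' => F (x'', κ)) x') x‖ ≤ C) (x y : X) :
    ‖fderiv ℝ (fun x' => F (x', κ)) y - fderiv ℝ (fun x' => F (x', κ)) x‖ ≤ C * ‖y - x‖ :=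
  Convex.norm_image_sub_le_of_norm_fderiv_le
    (fun _ _ => ((differentiable_fderiv_fst hF).comp
      (differentiable_id.prodMk (differentiable_const κ))).differentiableAt)
    (fun z _ => hC z) convex_univ (mem_univ x) (mem_univ y)

lemma norm_fderiv_fst_sub_le_of_norm_deriv_snd_le (hF : ContDiff ℝ 2 F) {x : X} {C : ℝ}
    (hC : ∀ κ, ‖deriv (fun κ' => fderiv ℝ (fun x' => F (x', κ')) x) κ‖ ≤ C)
    {k k' : ℝ} (hk : k ≤ k') :
    ‖fderiv ℝ (fun x' => F (x', k')) x - fderiv ℝ (fun x' => F (x', k)) x‖ ≤ C * (k' - k) := by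
  have := Convex.norm_image_sub_le_of_norm_deriv_le
    (fun κ _ => ((differentiable_fderiv_fst hF).comp
      ((differentiable_const x).prodMk differentiable_id)).differentiableAt)
    (fun κ _ => hC κ) convex_univ (mem_univ k) (mem_univ k')
  rwa [Real.norm_of_nonneg (sub_nonneg.2 hk)] at this

lemma norm_fderiv_fst_sub_fderiv_fst_le (hF : ContDiff ℝ 2 F) {x y : X} {k k' C₁ C₂ : ℝ}
    (hC₁ : ∀ κ, ‖deriv (fun κ' => fderiv ℝ (fun x' => F (x', κ')) y) κ‖ ≤ C₁)
    (hC₂ : ∀ z, ‖fderiv ℝ (fun x' => fderiv ℝ (fun x'' => F (x'', k')) x') z‖ ≤ C₂)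
    (hk : k ≤ k') :
    ‖fderiv ℝ (fun x' => F (x', k')) x - fderiv ℝ (fun x' => F (x', k)) y‖ ≤
      C₂ * ‖y - x‖ + C₁ * (k' - k) :=
  (norm_sub_le_norm_sub_add_norm_sub _ (fderiv ℝ (fun x' => F (x', k')) y) _).trans <|
    add_le_add (by simpa [norm_sub_rev] using norm_fderiv_fst_sub_le hF hC₂ y x)
      (norm_fderiv_fst_sub_le_of_norm_deriv_snd_le hF hC₁ hk)

lemma norm_sub_sub_fderiv_fst_apply_le (hF : ContDiff ℝ 2 F) {κ C : ℝ}
    (hC : ∀ x, ‖fderiv ℝ (fun x' => fderiv ℝ (fun x'' => F (x'', κ)) x') x‖ ≤ C) (x h : X) :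
    ‖F (x + h, κ) - F (x, κ) - fderiv ℝ (fun x' => F (x', κ)) x h‖ ≤ C / 2 * ‖h‖ ^ 2 :=
  norm_sub_sub_fderiv_apply_le (g := fun x' => F (x', κ))
    ((hF.differentiable two_ne_zero).comp (differentiable_id.prodMk (differentiable_const κ)))
    (fun y => norm_fderiv_fst_sub_le hF hC x y) h

end Partial

theorem stmt_13_general {X Y : Type*}
    [NormedAddCommGroup X] [InnerProductSpace ℝ X] [CompleteSpace X]
    [NormedAddCommGroup Y] [InnerProductSpace ℝ Y] [CompleteSpace Y]
    (F : X × ℝ → Y) (hF : ContDiff ℝ 2 F)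
    (d₀ d₁ d₂ d₃ d₄ : ℝ)
    (hFr : ∀ (r : X) (κ : ℝ), ‖fderiv ℝ (fun r' => F (r', κ)) r‖ ≤ d₁)
    (hFk : ∀ (r : X) (κ : ℝ), ‖deriv (fun κ' => F (r, κ')) κ‖ ≤ d₂)
    (hFrr : ∀ (r : X) (κ : ℝ),
      ‖fderiv ℝ (fun r' => fderiv ℝ (fun r'' => F (r'', κ)) r') r‖ ≤ d₃)
    (hFkr : ∀ (r : X) (κ : ℝ),
      ‖deriv (fun κ' => fderiv ℝ (fun r' => F (r', κ')) r) κ‖ ≤ d₄)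
    (X' : Submodule ℝ X)
    (P : X →L[ℝ] X) (hP : ∀ x : X, P x ∈ X' ∧ x - P x ∈ X'ᗮ)
    (k k' : ℝ) (hkk' : k ≤ k')
    (rt rt' : X) (hrtmem : rt ∈ X')
    (hrt : F (rt, k) = 0)
    (hclose : ‖rt' - rt‖ ≤ d₀ * (k' - k))
    (σ : ℝ) (hσ : 0 ≤ σ)
    (hlow : ∀ x : X, σ * ‖x‖ ≤ ‖fderiv ℝ (fun r' => F (r', k)) rt x‖)
    (α : ℝ) (hα : 0 < α)
    (δt : ℝ) (f : Y) (hf : ‖f‖ ≤ δt)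
    (r : X) (hrmem : r ∈ X')
    (B : X →L[ℝ] X)
    (hB₁ : B ∘L (α • (1 : X →L[ℝ] X) +
      ContinuousLinearMap.adjoint (fderiv ℝ (fun r' => F (r', k')) r) ∘L
        fderiv ℝ (fun r' => F (r', k')) r) = 1)
    (hB₂ : (α • (1 : X →L[ℝ] X) +
      ContinuousLinearMap.adjoint (fderiv ℝ (fun r' => F (r', k')) r) ∘L
        fderiv ℝ (fun r' => F (r', k')) r) ∘L B = 1)
    (rplus : X)
    (hrplus : rplus = r - P ((B ∘L
      ContinuousLinearMap.adjoint (fderiv ℝ (fun r' => F (r', k')) r))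
        (F (r, k') + f))) :
    ‖rt' - rplus‖ ≤ (k' - k) * (d₀ + d₂ / (2 * Real.sqrt α)) +
      δt / (2 * Real.sqrt α) +
      α / (α + σ ^ 2) * ‖rt - r‖ +
      9 * d₁ * d₄ / (4 * α) * (k' - k) * ‖rt - r‖ +
      (9 * d₁ * d₃ / (4 * α) + d₃ / (4 * Real.sqrt α)) * ‖rt - r‖ ^ 2 := by
  set A := fderiv ℝ (fun r' => F (r', k')) r
  set A₀ := fderiv ℝ (fun r' => F (r', k)) rt
  set e := rt - r
  set ε := d₃ * ‖e‖ + d₄ * (k' - k)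
  have hFrt : ‖F (rt, k')‖ ≤ d₂ * (k' - k) := by
    simpa [hrt] using norm_sub_le_of_norm_deriv_snd_le (hF.differentiable two_ne_zero) rt
      (hFk rt) hkk'
  have hTaylor : ‖F (rt, k') - F (r, k') - A e‖ ≤ d₃ / 2 * ‖e‖ ^ 2 := by
    have := norm_sub_sub_fderiv_fst_apply_le hF (hFrr · k') r e
    rwa [add_sub_cancel] at this
  have hw : ‖F (r, k') + f + A e‖ ≤ d₂ * (k' - k) + δt + d₃ / 2 * ‖e‖ ^ 2 := by
    rw [show F (r, k') + f + A e = F (rt, k') + f - (F (rt, k') - F (r, k') - A e) by abel]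
    exact (norm_sub_le _ _).trans (by gcongr; exact (norm_add_le _ _).trans (by gcongr))
  have hAA₀ : ‖A - A₀‖ ≤ ε := norm_fderiv_fst_sub_fderiv_fst_le hF (hFkr rt) (hFrr · k') hkk'
  have hαBe := mul_norm_apply_le_of_norm_sub_le hα hB₂ hσ hlow hAA₀ e
  have hcross : 2 * ‖A₀‖ * ε / α * ‖e‖ ≤
      9 * d₁ * d₄ / (4 * α) * (k' - k) * ‖e‖ + 9 * d₁ * d₃ / (4 * α) * ‖e‖ ^ 2 := by
    have hε : 0 ≤ ε := (norm_nonneg _).trans hAA₀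
    rw [show 9 * d₁ * d₄ / (4 * α) * (k' - k) * ‖e‖ + 9 * d₁ * d₃ / (4 * α) * ‖e‖ ^ 2
      = 9 / 4 * d₁ * ε / α * ‖e‖ by ring]
    gcongr
    · norm_num
    · exact hFr rt k
  rw [hrplus, comp_apply]
  calc ‖rt' - (r - P (B (adjoint A (F (r, k') + f))))‖
      ≤ d₀ * (k' - k) + (α / (α + σ ^ 2) * ‖e‖ + 2 * ‖A₀‖ * ε / α * ‖e‖) +
        (d₂ * (k' - k) + δt + d₃ / 2 * ‖e‖ ^ 2) / (2 * √α) :=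
      (norm_sub_projected_step_le hα hB₁ hB₂ hP (X'.sub_mem hrtmem hrmem) rt' _).trans
        (by gcongr)
    _ ≤ _ := by
      rw [show (d₂ * (k' - k) + δt + d₃ / 2 * ‖e‖ ^ 2) / (2 * √α) = (k' - k) * (d₂ / (2 * √α)) +
        δt / (2 * √α) + d₃ / (4 * √α) * ‖e‖ ^ 2 by field_simp; ring]
      linarith

/-- Noisy error estimate for the first projected Newton step after a frequency
increment. -/
theorem stmt_13 {X Y : Type*}
    [NormedAddCommGroup X] [InnerProductSpace ℝ X] [CompleteSpace X]
    [NormedAddCommGroup Y] [InnerProductSpace ℝ Y] [CompleteSpace Y]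
    (F : X × ℝ → Y) (hF : ContDiff ℝ 2 F)
    (d₀ d₁ d₂ d₃ d₄ : ℝ) (hd₀ : 0 < d₀) (hd₁ : 0 < d₁) (hd₂ : 0 < d₂)
    (hd₃ : 0 < d₃) (hd₄ : 0 < d₄)
    (hFr : ∀ (r : X) (κ : ℝ), ‖fderiv ℝ (fun r' => F (r', κ)) r‖ ≤ d₁)
    (hFk : ∀ (r : X) (κ : ℝ), ‖deriv (fun κ' => F (r, κ')) κ‖ ≤ d₂)
    (hFrr : ∀ (r : X) (κ : ℝ),
      ‖fderiv ℝ (fun r' => fderiv ℝ (fun r'' => F (r'', κ)) r') r‖ ≤ d₃)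
    (hFkr : ∀ (r : X) (κ : ℝ),
      ‖deriv (fun κ' => fderiv ℝ (fun r' => F (r', κ')) r) κ‖ ≤ d₄)
    (X' : Submodule ℝ X) (hX' : IsClosed (X' : Set X))
    (P : X →L[ℝ] X) (hP : ∀ x : X, P x ∈ X' ∧ x - P x ∈ X'ᗮ)
    (k k' : ℝ) (hkk' : k ≤ k')
    (rt rt' : X) (hrtmem : rt ∈ X') (hrt'mem : rt' ∈ X')
    (hrt : F (rt, k) = 0) (hrt' : F (rt', k') = 0)
    (hclose : ‖rt' - rt‖ ≤ d₀ * (k' - k))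
    (σ : ℝ) (hσ : 0 ≤ σ)
    (hlow : ∀ x : X, σ * ‖x‖ ≤ ‖fderiv ℝ (fun r' => F (r', k)) rt x‖)
    (α : ℝ) (hα : 0 < α)
    (δt : ℝ) (hδt : 0 ≤ δt) (f : Y) (hf : ‖f‖ ≤ δt)
    (r : X) (hrmem : r ∈ X')
    (B : X →L[ℝ] X)
    (hB₁ : B ∘L (α • (1 : X →L[ℝ] X) +
      ContinuousLinearMap.adjoint (fderiv ℝ (fun r' => F (r', k')) r) ∘L
        fderiv ℝ (fun r' => F (r', k')) r) = 1)
    (hB₂ : (α • (1 : X →L[ℝ] X) +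
      ContinuousLinearMap.adjoint (fderiv ℝ (fun r' => F (r', k')) r) ∘L
        fderiv ℝ (fun r' => F (r', k')) r) ∘L B = 1)
    (rplus : X)
    (hrplus : rplus = r - P ((B ∘L
      ContinuousLinearMap.adjoint (fderiv ℝ (fun r' => F (r', k')) r))
        (F (r, k') + f))) :
    ‖rt' - rplus‖ ≤ (k' - k) * (d₀ + d₂ / (2 * Real.sqrt α)) +
      δt / (2 * Real.sqrt α) +
      α / (α + σ ^ 2) * ‖rt - r‖ +
      9 * d₁ * d₄ / (4 * α) * (k' - k) * ‖rt - r‖ +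
      (9 * d₁ * d₃ / (4 * α) + d₃ / (4 * Real.sqrt α)) * ‖rt - r‖ ^ 2 :=
  stmt_13_general F hF d₀ d₁ d₂ d₃ d₄ hFr hFk hFrr hFkr X' P hP k k' hkk' rt rt' hrtmem hrt hclose σ
    hσ hlow α hα δt f hf r hrmem B hB₁ hB₂ rplus hrplus
end

section
/- Convergence rate of the projected recursive Newton method with exact data (Theorem 2.1, explicit form): let X and Y be real Hilbert spaces, N ≥ 1 and J ≥ 1 integers, Δk > 0 and k_n := k_l + nΔk for n = 0,…,N. Let X₀ ⊆ X₁ ⊆ … ⊆ X_N be closed subspaces of X with orthogonal projections P_n. Let F : X × ℝ → Y be twice continuously Fréchet differentiable with ‖∂_rF(r,k)‖ ≤ d₁, ‖∂_kF(r,k)‖ ≤ d₂, ‖∂²_{rr}F(r,k)‖ ≤ d₃ and ‖∂²_{kr}F(r,k)‖ ≤ d₄ for all (r,k). Suppose r̃₀, …, r̃_N ∈ X satisfy r̃_n ∈ X_n, F(r̃_n, k_n) = 0, and ‖r̃_{n+1} − r̃_n‖ ≤ d₀Δk for a constant d₀ ≥ 1, and suppose σ > 0 satisfies ‖∂_rF(r̃_n,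 k_n)x‖ ≥ σ‖x‖ for all x ∈ X and all n. Fix ε with 0 < ε < 3/(2 + d₀) and α > 0 with α ≤ εσ²/(3 − ε); set c₀ := 4ε/(3 d₃ (9 d₁ + √α)), q := ε(1 + d₀)/3 and b := ε(2 + d₀)/3, and assume the step-size conditions (9d₁d₄/(4α))Δk ≤ ε/3 and Δk(1 + d₂/(2d₀√α)) ≤ (1 − b)c₀α. Define the iterates by r⁰_{n+1} := r_n, r^{j+1}_{n+1} := r^j_{n+1} − P_{n+1} R_α(∂_rF(r^j_{n+1}, k_{n+1})) F(r^j_{n+1}, k_{n+1}) for j = 0,…,J−1, and r_{n+1} := r^J_{n+1}, starting from a given r₀ ∈ X₀. If ‖r̃₀ − r₀‖ ≤ d₀c₀α, then ‖r̃_n − r_n‖ ≤ d₀c₀α for every n = 0,…,N, and the final error satisfies ‖r̃_N − r_N‖ ≤ q^{J−1} · Δk (d₀ + d₂/(2√α)) / (1 − q^{J−1}b) + (q^{J−1}b)^N · d₀c₀α. -/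
/-!
Write `B = (αI + A*A)⁻¹` for the Jacobian `A` at the current iterate `x`. Then `B A* A = I - αB`,
so the error after the projected step is (up to the projection, a contraction) `αB(u - x)` plus
`B A*` applied to the linearization residual of `F` at `x` towards a zero `u`. The lower bound `σ`
on `∂ᵣF` at the exact solution survives perturbation by `δ = d₃‖u - x‖ + d₄Δk`, which gives
`‖αB‖ ≤ α / (α + σ² - 2d₁δ) ≲ ε/3`, while `‖BA*‖ ≤ 1/(2√α)` keeps the quadratic residual small as
long as the error stays below `d₀c₀α`. Hence every inner iteration contracts the error by `q`, the
first iteration at a new wavenumber additionally pays for the drift `d₀Δk` of the exact solutions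
and the change `d₂Δk` of the data, and the errors obey the affine recursion
`eₙ₊₁ ≤ q^(J-1) (b eₙ + Δk (d₀ + d₂/(2√α)))`, whose solution is the stated bound.
-/

open ContinuousLinearMap
open scoped RealInnerProductSpace

section Tikhonov

variable {X Y : Type*} [NormedAddCommGroup X] [InnerProductSpace ℝ X] [CompleteSpace X]
  [NormedAddCommGroup Y] [InnerProductSpace ℝ Y] [CompleteSpace Y]

/-- `B = (αI + A*A)⁻¹`, so that `B ∘ A*` is the regularized pseudoinverse `R_α(A)`. -/
structure IsTikhonovInverse (α : ℝ) (A : X →L[ℝ] Y) (B : X →L[ℝ] X) : Prop where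
  left_inv : B ∘L (α • 1 + adjoint A ∘L A) = 1
  right_inv : (α • 1 + adjoint A ∘L A) ∘L B = 1

namespace IsTikhonovInverse

variable {α : ℝ} {A : X →L[ℝ] Y} {B : X →L[ℝ] X}

theorem apply_adjoint_apply (hB : IsTikhonovInverse α A B) (v : X) :
    B (adjoint A (A v)) = v - α • B v := by
  have h := congrArg (fun T : X →L[ℝ] X => T v) hB.left_inv
  simp only [comp_apply, add_apply, smul_apply, one_apply_eq_self, map_add, map_smul] at h
  rw [eq_sub_iff_add_eq, add_comm, h]

theorem inner_apply_eq (hB : IsTikhonovInverse α A B) (y : X) :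
    ⟪y, B y⟫ = α * ‖B y‖ ^ 2 + ‖A (B y)‖ ^ 2 := by
  have h := congrArg (fun T : X →L[ℝ] X => ⟪T y, B y⟫) hB.right_inv
  simpa only [comp_apply, add_apply, smul_apply, one_apply_eq_self, inner_add_left,
    real_inner_smul_left, adjoint_inner_left, real_inner_self_eq_norm_sq, eq_comm] using h

theorem norm_apply_adjoint_le (hB : IsTikhonovInverse α A B) (hα : 0 < α) (y : Y) :
    ‖B (adjoint A y)‖ ≤ ‖y‖ / (2 * √α) := by
  set x := B (adjoint A y)
  have hx : α * ‖x‖ ^ 2 + ‖A x‖ ^ 2 ≤ ‖y‖ * ‖A x‖ := by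
    rw [← hB.inner_apply_eq, adjoint_inner_left]
    exact real_inner_le_norm y (A x)
  have hx' : (2 * √α * ‖x‖) ^ 2 ≤ ‖y‖ ^ 2 := by
    nlinarith [sq_nonneg (‖A x‖ - ‖y‖ / 2), Real.sq_sqrt hα.le]
  have := (pow_le_pow_iff_left₀ (by positivity) (norm_nonneg y) two_ne_zero).1 hx'
  rw [le_div_iff₀ (by positivity)]
  linarith

theorem norm_apply_le (hB : IsTikhonovInverse α A B) {m : ℝ} (hm : 0 < m)
    (hlow : ∀ v, m * ‖v‖ ^ 2 ≤ α * ‖v‖ ^ 2 + ‖A v‖ ^ 2) (y : X) :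
    ‖B y‖ ≤ ‖y‖ / m := by
  have h : m * ‖B y‖ ^ 2 ≤ ‖y‖ * ‖B y‖ :=
    (hlow _).trans (hB.inner_apply_eq y ▸ real_inner_le_norm y (B y))
  rw [le_div_iff₀ hm]
  rcases (norm_nonneg (B y)).eq_or_lt with h0 | h0
  · rw [← h0, zero_mul]; exact norm_nonneg y
  · exact le_of_mul_le_mul_right (by nlinarith) h0

end IsTikhonovInverse

end Tikhonov

section Projection

variable {X : Type*} [NormedAddCommGroup X] [InnerProductSpace ℝ X] {K : Submodule ℝ X}

theorem Submodule.eq_of_sub_mem_orthogonal {x p : X} (hx : x ∈ K) (hp : p ∈ K)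
    (hxp : x - p ∈ Kᗮ) : p = x :=
  (sub_eq_zero.1 <| (Submodule.mem_bot ℝ).1 <|
    K.inf_orthogonal_eq_bot ▸ ⟨K.sub_mem hx hp, hxp⟩).symm

theorem Submodule.norm_le_of_sub_mem_orthogonal {x p : X} (hp : p ∈ K) (hxp : x - p ∈ Kᗮ) :
    ‖p‖ ≤ ‖x‖ := by
  have h := norm_add_sq_eq_norm_sq_add_norm_sq_real (K.inner_right_of_mem_orthogonal hp hxp)
  rw [add_sub_cancel] at h
  exact (mul_self_le_mul_self_iff (norm_nonneg p) (norm_nonneg x)).2 (by nlinarith)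

end Projection

section ProjectedStep

variable {X Y : Type*} [NormedAddCommGroup X] [InnerProductSpace ℝ X] [CompleteSpace X]
  [NormedAddCommGroup Y] [InnerProductSpace ℝ Y] [CompleteSpace Y]

theorem norm_sub_projected_tikhonov_step_le {K : Submodule ℝ X} {P : X →L[ℝ] X}
    (hP : ∀ z, P z ∈ K ∧ z - P z ∈ Kᗮ) {α m : ℝ} (hα : 0 < α) (hm : 0 < m)
    {A : X →L[ℝ] Y} {B : X →L[ℝ] X} (hB : IsTikhonovInverse α A B)
    (hlow : ∀ v, m * ‖v‖ ^ 2 ≤ α * ‖v‖ ^ 2 + ‖A v‖ ^ 2)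
    {t x : X} (ht : t ∈ K) (hx : x ∈ K) (u : X) (y : Y) :
    ‖t - (x - P (B (adjoint A y)))‖ ≤
      ‖t - u‖ + α / m * ‖u - x‖ + ‖y + A (u - x)‖ / (2 * √α) := by
  set z := B (adjoint A y)
  have hPtx : P (t - x) = t - x :=
    K.eq_of_sub_mem_orthogonal (K.sub_mem ht hx) (hP _).1 (hP _).2
  have hproj : ‖t - (x - P z)‖ ≤ ‖t - x + z‖ := by
    rw [show t - (x - P z) = P (t - x + z) by rw [map_add, hPtx]; abel]
    exact K.norm_le_of_sub_mem_orthogonal (hP _).1 (hP _).2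
  have hsplit : t - x + z = (t - u) + (α • B (u - x) + B (adjoint A (y + A (u - x)))) := by
    rw [map_add, map_add, hB.apply_adjoint_apply]; abel
  have hreg : ‖α • B (u - x)‖ ≤ α / m * ‖u - x‖ := by
    rw [norm_smul, Real.norm_of_nonneg hα.le, div_mul_eq_mul_div, mul_div_assoc]
    exact mul_le_mul_of_nonneg_left (hB.norm_apply_le hm hlow _) hα.le
  calc ‖t - (x - P z)‖ ≤ ‖t - x + z‖ := hproj
    _ ≤ ‖t - u‖ + (‖α • B (u - x)‖ + ‖B (adjoint A (y + A (u - x)))‖) := by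
      rw [hsplit]; exact (norm_add_le _ _).trans (by gcongr; exact norm_add_le _ _)
    _ ≤ _ := by
      linarith [hB.norm_apply_adjoint_le hα (y + A (u - x))]

end ProjectedStep

section LowerBound

variable {X Y : Type*} [NormedAddCommGroup X] [NormedSpace ℝ X] [NormedAddCommGroup Y]
  [NormedSpace ℝ Y]

theorem ContinuousLinearMap.le_opNorm_of_forall_mul_norm_le [Nontrivial X] {T : X →L[ℝ] Y}
    {σ : ℝ} (h : ∀ v, σ * ‖v‖ ≤ ‖T v‖) : σ ≤ ‖T‖ := by
  obtain ⟨v, hv⟩ := exists_ne (0 : X)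
  exact le_of_mul_le_mul_right ((h v).trans (T.le_opNorm v)) (norm_pos_iff.2 hv)

theorem sq_sub_mul_le_norm_apply_sq {T A : X →L[ℝ] Y} {σ d δ : ℝ}
    (hσ : 0 ≤ σ) (hδ : 0 ≤ δ) (hT : ‖T‖ ≤ d) (hlow : ∀ v, σ * ‖v‖ ≤ ‖T v‖)
    (hAT : ‖A - T‖ ≤ δ) (v : X) :
    (σ ^ 2 - 2 * d * δ) * ‖v‖ ^ 2 ≤ ‖A v‖ ^ 2 := by
  have hσd : σ * ‖v‖ ≤ d * ‖v‖ := (hlow v).trans ((T.le_opNorm v).trans (by gcongr))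
  have hAv : (σ - δ) * ‖v‖ ≤ ‖A v‖ :=
    calc (σ - δ) * ‖v‖ ≤ ‖T v‖ - ‖A - T‖ * ‖v‖ := by nlinarith [hlow v, norm_nonneg v]
      _ ≤ ‖A v - (A - T) v‖ - ‖(A - T) v‖ := by
        rw [sub_apply, sub_sub_cancel]; gcongr; exact (A - T).le_opNorm v
      _ ≤ ‖A v‖ := by linarith [norm_sub_le (A v) ((A - T) v)]
  have hδv : 0 ≤ δ * ‖v‖ := by positivity
  rcases le_total σ δ with h | h
  · nlinarith [mul_le_mul_of_nonneg_left hσd hδv,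
      mul_le_mul_of_nonneg_right h (by positivity : 0 ≤ σ * ‖v‖ ^ 2)]
  · have hσδ : 0 ≤ (σ - δ) * ‖v‖ := mul_nonneg (sub_nonneg.2 h) (norm_nonneg v)
    nlinarith [mul_le_mul hAv hAv hσδ (norm_nonneg _), mul_le_mul_of_nonneg_left hσd hδv]

end LowerBound

section Scalar

theorem tikhonov_contraction_factor_le {α σ ε d γ δ : ℝ} (hα : 0 < α) (hσ : 0 ≤ σ)
    (hσd : σ ≤ d) (hε : ε ≤ 1) (hαε : 3 * α ≤ ε * (α + σ ^ 2)) (hγ : ε * γ ≤ 3)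
    (hδ : 0 ≤ δ) (hδγ : 27 * d * δ ≤ 4 * ε * γ * α) :
    0 < α + σ ^ 2 - 2 * d * δ ∧
      α / (α + σ ^ 2 - 2 * d * δ) + δ / (2 * √α) ≤ ε * (1 + γ) / 3 := by
  have hs := Real.sqrt_pos.mpr hα
  have hs2 := Real.sq_sqrt hα.le
  have hσ2 : 2 * α ≤ σ ^ 2 := by nlinarith
  have hσ0 : 0 < σ ^ 2 := by linarith
  have hε0 : 0 < ε := by nlinarith
  have hsd : √α ≤ d := by nlinarith
  have hεγ : 0 ≤ ε * γ := by nlinarith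
  have hx : 2 * d * δ ≤ α := by nlinarith
  refine ⟨by linarith, ?_⟩
  have h₁ : α / (α + σ ^ 2 - 2 * d * δ) ≤ ε / 3 + 2 * ε * d * δ / (3 * σ ^ 2) := by
    rw [div_le_iff₀ (by linarith), div_add_div _ _ (by norm_num) (by positivity),
      div_mul_eq_mul_div, le_div_iff₀ (by positivity)]
    nlinarith [mul_nonneg (mul_nonneg hε0.le (mul_nonneg (mul_nonneg zero_le_two (hσ.trans hσd))
      hδ)) (sub_nonneg.2 hx), mul_le_mul_of_nonneg_right hαε hσ0.le]
  have h₂ : 2 * ε * d * δ / (3 * σ ^ 2) ≤ ε * γ / 6 := by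
    rw [div_le_div_iff₀ (by positivity) (by norm_num)]
    nlinarith [mul_nonneg (mul_nonneg hεγ hσ0.le) (sub_nonneg.2 hε),
      mul_le_mul_of_nonneg_left hσ2 hεγ]
  have h₃ : δ / (2 * √α) ≤ ε * γ / 6 := by
    rw [div_le_div_iff₀ (by positivity) (by norm_num)]
    have : d * (27 * δ) ≤ d * (4 * ε * γ * √α) := by
      nlinarith [mul_le_mul_of_nonneg_left hsd (by positivity : 0 ≤ ε * γ * √α)]
    nlinarith [le_of_mul_le_mul_left this (hs.trans_le hsd)]
  linarith

theorem affine_recurrence_le {a : ℕ → ℝ} {ρ c R : ℝ} {N : ℕ} (hρ0 : 0 ≤ ρ) (hρ1 : ρ < 1)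
    (hc : 0 ≤ c) (hR : ρ * R + c ≤ R) (h0 : a 0 ≤ R)
    (hstep : ∀ n < N, a n ≤ R → a (n + 1) ≤ ρ * a n + c) :
    ∀ n ≤ N, a n ≤ R ∧ a n ≤ c / (1 - ρ) + ρ ^ n * a 0 := by
  have hρ : 0 < 1 - ρ := sub_pos.2 hρ1
  intro n
  induction n with
  | zero => exact fun _ => ⟨h0, by simpa using div_nonneg hc hρ.le⟩
  | succ n ih =>
    intro hn
    obtain ⟨haR, ha⟩ := ih (by omega)
    have hnext := hstep n hn haR
    refine ⟨by nlinarith, hnext.trans ?_⟩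
    calc ρ * a n + c ≤ ρ * (c / (1 - ρ) + ρ ^ n * a 0) + c := by gcongr
      _ = c / (1 - ρ) + ρ ^ (n + 1) * a 0 := by field_simp; ring

end Scalar

section Calculus

variable {E G : Type*} [NormedAddCommGroup E] [NormedSpace ℝ E] [NormedAddCommGroup G]
  [NormedSpace ℝ G]

theorem ContDiff.norm_image_sub_sub_fderiv_le {f : E → G} (hf : ContDiff ℝ 2 f) {L : ℝ}
    (hL : ∀ x, ‖fderiv ℝ (fderiv ℝ f) x‖ ≤ L) (a b : E) :
    ‖f b - f a - fderiv ℝ f a (b - a)‖ ≤ L * ‖b - a‖ ^ 2 := by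
  have hf' : Differentiable ℝ (fderiv ℝ f) :=
    (hf.fderiv_right (m := 1) (by norm_num)).differentiable (by norm_num)
  have hlip : ∀ x, ‖fderiv ℝ f x - fderiv ℝ f a‖ ≤ L * ‖x - a‖ := fun x =>
    convex_univ.norm_image_sub_le_of_norm_fderiv_le (fun y _ => hf' y) (fun y _ => hL y)
      trivial trivial
  have hL0 : 0 ≤ L := (hL a).trans' (by positivity)
  calc ‖f b - f a - fderiv ℝ f a (b - a)‖ ≤ L * ‖b - a‖ * ‖b - a‖ :=
        (convex_closedBall a ‖b - a‖).norm_image_sub_le_of_norm_fderiv_le'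
          (fun x _ => (hf.differentiable (by norm_num)) x)
          (fun x hx => (hlip x).trans (by rw [Metric.mem_closedBall, dist_eq_norm] at hx; gcongr))
          (Metric.mem_closedBall_self (norm_nonneg _)) (by simp [dist_eq_norm])
    _ = L * ‖b - a‖ ^ 2 := by ring

end Calculus

section PartialDerivatives

variable {X Y : Type*} [NormedAddCommGroup X] [NormedSpace ℝ X] [NormedAddCommGroup Y]
  [NormedSpace ℝ Y]

structure PartialDerivBounds (F : X × ℝ → Y) (d₁ d₂ d₃ d₄ : ℝ) : Prop where
  contDiff : ContDiff ℝ 2 F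
  fst : ∀ r κ, ‖fderiv ℝ (fun r' => F (r', κ)) r‖ ≤ d₁
  snd : ∀ r κ, ‖deriv (fun κ' => F (r, κ')) κ‖ ≤ d₂
  fst_fst : ∀ r κ, ‖fderiv ℝ (fun r' => fderiv ℝ (fun r'' => F (r'', κ)) r') r‖ ≤ d₃
  snd_fst : ∀ r κ, ‖deriv (fun κ' => fderiv ℝ (fun r' => F (r', κ')) r) κ‖ ≤ d₄

variable {F : X × ℝ → Y}

theorem norm_partial_fst_fderiv_sub_le (hF : ContDiff ℝ 2 F) {d₃ : ℝ}
    (hFrr : ∀ r κ, ‖fderiv ℝ (fun r' => fderiv ℝ (fun r'' => F (r'', κ)) r') r‖ ≤ d₃)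
    (κ : ℝ) (a b : X) :
    ‖fderiv ℝ (fun r => F (r, κ)) a - fderiv ℝ (fun r => F (r, κ)) b‖ ≤ d₃ * ‖a - b‖ := by
  have h : Differentiable ℝ (fderiv ℝ (fun r => F (r, κ))) :=
    ((hF.comp (contDiff_id.prodMk contDiff_const)).fderiv_right (m := 1)
      (by norm_num)).differentiable (by norm_num)
  exact convex_univ.norm_image_sub_le_of_norm_fderiv_le (fun y _ => h y) (fun r _ => hFrr r κ)
    trivial trivial

theorem norm_partial_fst_taylor_le (hF : ContDiff ℝ 2 F) {d₃ : ℝ}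
    (hFrr : ∀ r κ, ‖fderiv ℝ (fun r' => fderiv ℝ (fun r'' => F (r'', κ)) r') r‖ ≤ d₃)
    (κ : ℝ) (a b : X) :
    ‖F (b, κ) - F (a, κ) - fderiv ℝ (fun r => F (r, κ)) a (b - a)‖ ≤ d₃ * ‖b - a‖ ^ 2 :=
  (hF.comp (contDiff_id.prodMk contDiff_const)).norm_image_sub_sub_fderiv_le (fun r => hFrr r κ) a b

theorem norm_partial_snd_sub_le (hF : ContDiff ℝ 2 F) {d₂ : ℝ}
    (hFk : ∀ r κ, ‖deriv (fun κ' => F (r, κ')) κ‖ ≤ d₂) (r : X) (κ₁ κ₂ : ℝ) :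
    ‖F (r, κ₂) - F (r, κ₁)‖ ≤ d₂ * ‖κ₂ - κ₁‖ :=
  convex_univ.norm_image_sub_le_of_norm_deriv_le
    (fun κ _ => ((hF.comp (contDiff_const.prodMk contDiff_id)).differentiable (by norm_num)) κ)
    (fun κ _ => hFk r κ) trivial trivial

theorem norm_partial_fst_fderiv_sub_snd_le (hF : ContDiff ℝ 2 F) {d₄ : ℝ}
    (hFkr : ∀ r κ, ‖deriv (fun κ' => fderiv ℝ (fun r' => F (r', κ')) r) κ‖ ≤ d₄)
    (r : X) (κ₁ κ₂ : ℝ) :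
    ‖fderiv ℝ (fun r' => F (r', κ₂)) r - fderiv ℝ (fun r' => F (r', κ₁)) r‖
      ≤ d₄ * ‖κ₂ - κ₁‖ := by
  have h : ContDiff ℝ 1 (fun κ => fderiv ℝ (fun r' => F (r', κ)) r) :=
    ContDiff.fderiv (hF.comp (contDiff_snd.prodMk contDiff_fst)) contDiff_const (by norm_num)
  exact convex_univ.norm_image_sub_le_of_norm_deriv_le
    (fun κ _ => (h.differentiable (by norm_num)) κ) (fun κ _ => hFkr r κ) trivial trivial

end PartialDerivatives

section Newton

variable {X Y : Type*} [NormedAddCommGroup X] [InnerProductSpace ℝ X] [CompleteSpace X]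
  [NormedAddCommGroup Y] [InnerProductSpace ℝ Y] [CompleteSpace Y]

variable {F : X × ℝ → Y} {d₁ d₂ d₃ d₄ : ℝ} {K : Submodule ℝ X} {P : X →L[ℝ] X} {α σ ε : ℝ}

theorem norm_sub_newton_step_le (hF : PartialDerivBounds F d₁ d₂ d₃ d₄)
    (hP : ∀ z, P z ∈ K ∧ z - P z ∈ Kᗮ) (hα : 0 < α) (hσ : 0 ≤ σ) (hε : ε ≤ 1)
    (hαε : 3 * α ≤ ε * (α + σ ^ 2)) {γ : ℝ} (hγ : ε * γ ≤ 3) {u : X} {κ : ℝ}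
    (hu : F (u, κ) = 0) (hlow : ∀ v, σ * ‖v‖ ≤ ‖fderiv ℝ (fun r' => F (r', κ)) u v‖)
    {t x : X} (ht : t ∈ K) (hx : x ∈ K) {κ' : ℝ} {A : X →L[ℝ] Y} {B : X →L[ℝ] X}
    (hA : A = fderiv ℝ (fun r' => F (r', κ')) x) (hB : IsTikhonovInverse α A B)
    (hsmall : 27 * d₁ * (d₃ * ‖u - x‖ + d₄ * ‖κ' - κ‖) ≤ 4 * ε * γ * α) :
    ‖t - (x - P (B (adjoint A (F (x, κ')))))‖ ≤
      ‖t - u‖ + d₂ * ‖κ' - κ‖ / (2 * √α) + ε * (1 + γ) / 3 * ‖u - x‖ := by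
  have hd₂ : 0 ≤ d₂ := (hF.snd u κ).trans' (norm_nonneg _)
  have hd₃ : 0 ≤ d₃ := (hF.fst_fst u κ).trans' (by positivity)
  have hd₄ : 0 ≤ d₄ := (hF.snd_fst u κ).trans' (norm_nonneg _)
  rcases subsingleton_or_nontrivial X with hX | hX
  · have h0 : ∀ z : X, ‖z‖ = 0 := fun z => by rw [Subsingleton.elim z 0, norm_zero]
    rw [h0, h0, h0, mul_zero, zero_add]
    positivity
  have hσd : σ ≤ d₁ := (le_opNorm_of_forall_mul_norm_le hlow).trans (hF.fst u κ)
  set e := ‖u - x‖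
  set h := ‖κ' - κ‖
  set δ := d₃ * e + d₄ * h
  set D := fun c r => fderiv ℝ (fun r' => F (r', c)) r
  have hAx : ‖A - D κ x‖ ≤ d₄ * h :=
    hA ▸ norm_partial_fst_fderiv_sub_snd_le hF.contDiff hF.snd_fst x κ κ'
  have hAu : ‖A - D κ u‖ ≤ δ :=
    calc ‖A - D κ u‖ ≤ ‖A - D κ x‖ + ‖D κ x - D κ u‖ := norm_sub_le_norm_sub_add_norm_sub _ _ _
      _ ≤ d₄ * h + d₃ * ‖x - u‖ :=
        add_le_add hAx (norm_partial_fst_fderiv_sub_le hF.contDiff hF.fst_fst κ x u)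
      _ = δ := by rw [norm_sub_rev]; ring
  have hres : ‖F (x, κ') + A (u - x)‖ ≤ d₂ * h + δ * e := by
    have hsplit : F (x, κ') + A (u - x) = (F (x, κ') - F (x, κ)) + (A - D κ x) (u - x)
        - (F (u, κ) - F (x, κ) - D κ x (u - x)) := by
      rw [hu, sub_apply]; abel
    rw [hsplit]
    refine (norm_sub_le _ _).trans ((add_le_add (norm_add_le _ _) le_rfl).trans ?_)
    have := norm_partial_snd_sub_le hF.contDiff hF.snd x κ κ'
    have := ((A - D κ x).le_opNorm (u - x)).trans (mul_le_mul_of_nonneg_right hAx (norm_nonneg _))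
    have := norm_partial_fst_taylor_le hF.contDiff hF.fst_fst κ x u
    nlinarith
  obtain ⟨hm, hfactor⟩ :=
    tikhonov_contraction_factor_le hα hσ hσd hε hαε hγ (by positivity) hsmall
  have hlowA : ∀ v, (α + σ ^ 2 - 2 * d₁ * δ) * ‖v‖ ^ 2 ≤ α * ‖v‖ ^ 2 + ‖A v‖ ^ 2 := fun v => by
    nlinarith [sq_sub_mul_le_norm_apply_sq hσ (by positivity) (hF.fst u κ) hlow hAu v]
  calc _ ≤ ‖t - u‖ + α / (α + σ ^ 2 - 2 * d₁ * δ) * e + (d₂ * h + δ * e) / (2 * √α) :=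
        (norm_sub_projected_tikhonov_step_le hP hα hm hB hlowA ht hx u _).trans (by gcongr)
    _ = ‖t - u‖ + d₂ * h / (2 * √α) + (α / (α + σ ^ 2 - 2 * d₁ * δ) + δ / (2 * √α)) * e := by
        ring
    _ ≤ _ := by gcongr

theorem norm_sub_newton_loop_le (hF : PartialDerivBounds F d₁ d₂ d₃ d₄)
    (hP : ∀ z, P z ∈ K ∧ z - P z ∈ Kᗮ) (hα : 0 < α) (hσ : 0 ≤ σ) (hε : ε ≤ 1)
    (hαε : 3 * α ≤ ε * (α + σ ^ 2)) {d₀ q b : ℝ} (hd₀ : 0 ≤ d₀) (hq : q = ε * (1 + d₀) / 3)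
    (hb : b = ε * (2 + d₀) / 3) (hb1 : b < 1) {u t : X} {κ κ' : ℝ} (hu : F (u, κ) = 0)
    (hlowu : ∀ v, σ * ‖v‖ ≤ ‖fderiv ℝ (fun r' => F (r', κ)) u v‖) (ht : t ∈ K)
    (ht0 : F (t, κ') = 0) (hlowt : ∀ v, σ * ‖v‖ ≤ ‖fderiv ℝ (fun r' => F (r', κ')) t v‖)
    {J : ℕ} (hJ : 1 ≤ J) {x : ℕ → X} (hx : ∀ j ≤ J, x j ∈ K) {A : ℕ → X →L[ℝ] Y}
    {B : ℕ → X →L[ℝ] X} (hA : ∀ j < J, A j = fderiv ℝ (fun r' => F (r', κ')) (x j))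
    (hB : ∀ j < J, IsTikhonovInverse α (A j) (B j))
    (hxstep : ∀ j < J, x (j + 1) = x j - P ((B j ∘L adjoint (A j)) (F (x j, κ'))))
    {R C : ℝ} (hR : 27 * d₁ * d₃ * R ≤ 4 * ε * d₀ * α) (hκ : 27 * d₁ * (d₄ * ‖κ' - κ‖) ≤ 4 * ε * α)
    (hC : ‖t - u‖ + d₂ * ‖κ' - κ‖ / (2 * √α) ≤ C) (hbRC : b * R + C ≤ R)
    (he : ‖u - x 0‖ ≤ R) :
    ‖t - x J‖ ≤ q ^ (J - 1) * (b * ‖u - x 0‖ + C) := by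
  have hε0 : 0 < ε := by nlinarith
  have hq0 : 0 ≤ q := by rw [hq]; positivity
  have hq1 : q < 1 := by rw [hq]; linarith [hb ▸ hb1]
  have hd₁₃ : 0 ≤ 27 * d₁ * d₃ := by
    have := (hF.fst u κ).trans' (norm_nonneg _)
    have := (hF.fst_fst u κ).trans' (by positivity)
    positivity
  have hb0 : 0 ≤ b := by rw [hb]; positivity
  have hfirst : ‖t - x (0 + 1)‖ ≤ b * ‖u - x 0‖ + C := by
    have := norm_sub_newton_step_le hF hP hα hσ hε hαε (γ := d₀ + 1) (by linarith [hb ▸ hb1])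
      hu hlowu ht (hx 0 (by omega)) (hA 0 hJ) (hB 0 hJ)
      (by linarith [mul_le_mul_of_nonneg_left he hd₁₃])
    rw [hxstep 0 hJ, comp_apply]
    rw [show ε * (1 + (d₀ + 1)) / 3 = b by rw [hb]; ring] at this
    linarith
  have hinner : ∀ j < J - 1, ‖t - x (j + 1)‖ ≤ R →
      ‖t - x (j + 1 + 1)‖ ≤ q * ‖t - x (j + 1)‖ + 0 := by
    intro j hj hej
    have := norm_sub_newton_step_le hF hP hα hσ hε hαε (γ := d₀) (by linarith [hb ▸ hb1])
      ht0 hlowt ht (hx (j + 1) (by omega)) (hA (j + 1) (by omega)) (hB (j + 1) (by omega))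
      (by rw [sub_self, norm_zero, mul_zero, add_zero]
          linarith [mul_le_mul_of_nonneg_left hej hd₁₃])
    simp only [sub_self, norm_zero, mul_zero, zero_div, add_zero, zero_add, ← hq] at this
    rw [hxstep (j + 1) (by omega), comp_apply, add_zero]
    exact this
  have hR0 : 0 ≤ R := (norm_nonneg _).trans he
  have hloop := (affine_recurrence_le (a := fun j => ‖t - x (j + 1)‖) hq0 hq1 le_rfl
    (by linarith [mul_le_of_le_one_left hR0 hq1.le])
    (hfirst.trans (by linarith [mul_le_mul_of_nonneg_left he hb0])) hinner (J - 1) le_rfl).2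
  simp only [Nat.sub_add_cancel hJ, zero_div, zero_add] at hloop
  exact hloop.trans (by gcongr)

end Newton

theorem projected_iterates_mem {X : Type*} [AddCommGroup X] [Module ℝ X] {N J : ℕ}
    {Xs : ℕ → Submodule ℝ X} (hmono : ∀ n < N, Xs n ≤ Xs (n + 1)) {P : ℕ → X → X}
    (hP : ∀ n ≤ N, ∀ x, P n x ∈ Xs n) {r : ℕ → X} {rr : ℕ → ℕ → X} (g : ℕ → ℕ → X)
    (hrr0 : ∀ n < N, rr n 0 = r n)
    (hrrstep : ∀ n < N, ∀ j < J, rr n (j + 1) = rr n j - P (n + 1) (g n j))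
    (hrJ : ∀ n < N, r (n + 1) = rr n J) (hr0 : r 0 ∈ Xs 0) :
    ∀ n < N, ∀ j ≤ J, rr n j ∈ Xs (n + 1) := by
  have hrr : ∀ n < N, r n ∈ Xs n → ∀ j ≤ J, rr n j ∈ Xs (n + 1) := by
    intro n hn hr j hj
    induction j with
    | zero => exact hrr0 n hn ▸ hmono n hn hr
    | succ j ih => exact hrrstep n hn j hj ▸ sub_mem (ih (by omega)) (hP (n + 1) hn _)
  have hr : ∀ n ≤ N, r n ∈ Xs n := by
    intro n hn
    induction n with
    | zero => exact hr0
    | succ n ih => exact hrJ n hn ▸ hrr n hn (ih (by omega)) J le_rfl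
  exact fun n hn => hrr n hn (hr n hn.le)

theorem stmt_15_general {X Y : Type*}
    [NormedAddCommGroup X] [InnerProductSpace ℝ X] [CompleteSpace X]
    [NormedAddCommGroup Y] [InnerProductSpace ℝ Y] [CompleteSpace Y]
    (N J : ℕ) (hJ : 1 ≤ J)
    (kl Δk : ℝ) (hΔk : 0 < Δk)
    (k : ℕ → ℝ) (hk : ∀ n : ℕ, k n = kl + n * Δk)
    (Xs : ℕ → Submodule ℝ X)
    (hXsmono : ∀ n, n < N → Xs n ≤ Xs (n + 1))
    (P : ℕ → X →L[ℝ] X)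
    (hP : ∀ n, n ≤ N → ∀ x : X, P n x ∈ Xs n ∧ x - P n x ∈ (Xs n)ᗮ)
    (F : X × ℝ → Y) (hF : ContDiff ℝ 2 F)
    (d₀ d₁ d₂ d₃ d₄ : ℝ) (hd₀ : 1 ≤ d₀) (hd₁ : 0 < d₁) (hd₂ : 0 < d₂)
    (hd₃ : 0 < d₃)
    (hFr : ∀ (r : X) (κ : ℝ), ‖fderiv ℝ (fun r' => F (r', κ)) r‖ ≤ d₁)
    (hFk : ∀ (r : X) (κ : ℝ), ‖deriv (fun κ' => F (r, κ')) κ‖ ≤ d₂)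
    (hFrr : ∀ (r : X) (κ : ℝ),
      ‖fderiv ℝ (fun r' => fderiv ℝ (fun r'' => F (r'', κ)) r') r‖ ≤ d₃)
    (hFkr : ∀ (r : X) (κ : ℝ),
      ‖deriv (fun κ' => fderiv ℝ (fun r' => F (r', κ')) r) κ‖ ≤ d₄)
    (rt : ℕ → X)
    (hrtmem : ∀ n, n ≤ N → rt n ∈ Xs n)
    (hrtzero : ∀ n, n ≤ N → F (rt n, k n) = 0)
    (hrtstep : ∀ n, n < N → ‖rt (n + 1) - rt n‖ ≤ d₀ * Δk)
    (σ : ℝ) (hσ : 0 < σ)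
    (hlow : ∀ n, n ≤ N → ∀ x : X,
      σ * ‖x‖ ≤ ‖fderiv ℝ (fun r' => F (r', k n)) (rt n) x‖)
    (ε α : ℝ) (hε0 : 0 < ε) (hε1 : ε < 3 / (2 + d₀))
    (hα : 0 < α) (hαle : α ≤ ε * σ ^ 2 / (3 - ε))
    (c₀ q b : ℝ)
    (hc₀ : c₀ = 4 * ε / (3 * d₃ * (9 * d₁ + Real.sqrt α)))
    (hqdef : q = ε * (1 + d₀) / 3)
    (hbdef : b = ε * (2 + d₀) / 3)
    (hstep1 : 9 * d₁ * d₄ / (4 * α) * Δk ≤ ε / 3)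
    (hstep2 : Δk * (1 + d₂ / (2 * d₀ * Real.sqrt α)) ≤ (1 - b) * c₀ * α)
    (r : ℕ → X) (rr : ℕ → ℕ → X)
    (A : ℕ → ℕ → X →L[ℝ] Y)
    (hA : ∀ n, n < N → ∀ j, j < J →
      A n j = fderiv ℝ (fun r' => F (r', k (n + 1))) (rr n j))
    (B : ℕ → ℕ → X →L[ℝ] X)
    (hB : ∀ n, n < N → ∀ j, j < J →
      B n j ∘L (α • (1 : X →L[ℝ] X) +
        ContinuousLinearMap.adjoint (A n j) ∘L A n j) = 1 ∧
      (α • (1 : X →L[ℝ] X) +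
        ContinuousLinearMap.adjoint (A n j) ∘L A n j) ∘L B n j = 1)
    (hrr0 : ∀ n, n < N → rr n 0 = r n)
    (hrrstep : ∀ n, n < N → ∀ j, j < J →
      rr n (j + 1) = rr n j - P (n + 1)
        ((B n j ∘L ContinuousLinearMap.adjoint (A n j)) (F (rr n j, k (n + 1)))))
    (hrJ : ∀ n, n < N → r (n + 1) = rr n J)
    (hr0mem : r 0 ∈ Xs 0)
    (hinit : ‖rt 0 - r 0‖ ≤ d₀ * c₀ * α) :
    (∀ n, n ≤ N → ‖rt n - r n‖ ≤ d₀ * c₀ * α) ∧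
    ‖rt N - r N‖ ≤
      q ^ (J - 1) * Δk * (d₀ + d₂ / (2 * Real.sqrt α)) / (1 - q ^ (J - 1) * b) +
      (q ^ (J - 1) * b) ^ N * (d₀ * c₀ * α) := by
  have hεd : ε * (2 + d₀) < 3 := (lt_div_iff₀ (by linarith)).1 hε1
  have hε : ε ≤ 1 := by nlinarith
  have hαε : 3 * α ≤ ε * (α + σ ^ 2) := by
    nlinarith [(le_div_iff₀ (by linarith : (0 : ℝ) < 3 - ε)).1 hαle]
  have hd₀0 : 0 < d₀ := by linarith
  have hc₀0 : 0 ≤ c₀ := by rw [hc₀]; positivity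
  have hq0 : 0 ≤ q := by rw [hqdef]; positivity
  have hb0 : 0 ≤ b := by rw [hbdef]; positivity
  have hb1 : b < 1 := by rw [hbdef]; linarith
  have hqJ : q ^ (J - 1) ≤ 1 := pow_le_one₀ hq0 (by rw [hqdef]; linarith)
  have hR : 27 * d₁ * d₃ * (d₀ * c₀ * α) ≤ 4 * ε * d₀ * α := by
    rw [hc₀]; field_simp
    nlinarith [Real.sqrt_nonneg α]
  have hΔ : 27 * d₁ * (d₄ * Δk) ≤ 4 * ε * α := by
    rw [div_mul_eq_mul_div, div_le_iff₀ (by linarith)] at hstep1; linarith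
  have hbRC : b * (d₀ * c₀ * α) + Δk * (d₀ + d₂ / (2 * √α)) ≤ d₀ * c₀ * α := by
    have : Δk * (d₀ + d₂ / (2 * √α)) = d₀ * (Δk * (1 + d₂ / (2 * d₀ * √α))) := by field_simp
    nlinarith [mul_le_mul_of_nonneg_left hstep2 hd₀0.le]
  have hmem := projected_iterates_mem hXsmono (fun n hn x => (hP n hn x).1)
    (fun n j => (B n j ∘L adjoint (A n j)) (F (rr n j, k (n + 1)))) hrr0 hrrstep hrJ hr0mem
  have hfreq : ∀ n < N, ‖rt n - r n‖ ≤ d₀ * c₀ * α → ‖rt (n + 1) - r (n + 1)‖ ≤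
      q ^ (J - 1) * b * ‖rt n - r n‖ + q ^ (J - 1) * Δk * (d₀ + d₂ / (2 * √α)) := by
    intro n hn he
    have hκ : ‖k (n + 1) - k n‖ = Δk := by
      rw [hk, hk, Real.norm_eq_abs]; push_cast; ring_nf; exact abs_of_pos hΔk
    have hdrift : ‖rt (n + 1) - rt n‖ + d₂ * ‖k (n + 1) - k n‖ / (2 * √α) ≤
        Δk * (d₀ + d₂ / (2 * √α)) := by
      rw [hκ, mul_add, mul_div_assoc', mul_comm Δk d₂]
      linarith [hrtstep n hn]
    have hloop := norm_sub_newton_loop_le ⟨hF, hFr, hFk, hFrr, hFkr⟩ (hP (n + 1) hn) hα hσ.le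
      hε hαε hd₀0.le hqdef hbdef hb1 (hrtzero n hn.le) (hlow n hn.le) (hrtmem (n + 1) hn)
      (hrtzero (n + 1) hn) (hlow (n + 1) hn) hJ (hmem n hn) (hA n hn)
      (fun j hj => ⟨(hB n hn j hj).1, (hB n hn j hj).2⟩) (hrrstep n hn) hR (hκ ▸ hΔ) hdrift
      hbRC (hrr0 n hn ▸ he)
    rw [hrJ n hn]
    rw [hrr0 n hn] at hloop
    exact hloop.trans_eq (by ring)
  have hinv : q ^ (J - 1) * b * (d₀ * c₀ * α) + q ^ (J - 1) * Δk * (d₀ + d₂ / (2 * √α)) ≤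
      d₀ * c₀ * α :=
    calc _ = q ^ (J - 1) * (b * (d₀ * c₀ * α) + Δk * (d₀ + d₂ / (2 * √α))) := by ring
      _ ≤ d₀ * c₀ * α := (mul_le_of_le_one_left (by positivity) hqJ).trans hbRC
  have hall := affine_recurrence_le (a := fun n => ‖rt n - r n‖) (by positivity)
    ((mul_le_of_le_one_left hb0 hqJ).trans_lt hb1) (by positivity) hinv hinit hfreq
  refine ⟨fun n hn => (hall n hn).1, (hall N le_rfl).2.trans ?_⟩
  gcongr

/-- Convergence rate of the projected recursive Newton method with exact data
(Theorem 2.1, explicit form). -/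
theorem stmt_15 {X Y : Type*}
    [NormedAddCommGroup X] [InnerProductSpace ℝ X] [CompleteSpace X]
    [NormedAddCommGroup Y] [InnerProductSpace ℝ Y] [CompleteSpace Y]
    (N J : ℕ) (hN : 1 ≤ N) (hJ : 1 ≤ J)
    (kl Δk : ℝ) (hΔk : 0 < Δk)
    (k : ℕ → ℝ) (hk : ∀ n : ℕ, k n = kl + n * Δk)
    (Xs : ℕ → Submodule ℝ X)
    (hXsclosed : ∀ n, n ≤ N → IsClosed ((Xs n : Set X)))
    (hXsmono : ∀ n, n < N → Xs n ≤ Xs (n + 1))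
    (P : ℕ → X →L[ℝ] X)
    (hP : ∀ n, n ≤ N → ∀ x : X, P n x ∈ Xs n ∧ x - P n x ∈ (Xs n)ᗮ)
    (F : X × ℝ → Y) (hF : ContDiff ℝ 2 F)
    (d₀ d₁ d₂ d₃ d₄ : ℝ) (hd₀ : 1 ≤ d₀) (hd₁ : 0 < d₁) (hd₂ : 0 < d₂)
    (hd₃ : 0 < d₃) (hd₄ : 0 < d₄)
    (hFr : ∀ (r : X) (κ : ℝ), ‖fderiv ℝ (fun r' => F (r', κ)) r‖ ≤ d₁)
    (hFk : ∀ (r : X) (κ : ℝ), ‖deriv (fun κ' => F (r, κ')) κ‖ ≤ d₂)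
    (hFrr : ∀ (r : X) (κ : ℝ),
      ‖fderiv ℝ (fun r' => fderiv ℝ (fun r'' => F (r'', κ)) r') r‖ ≤ d₃)
    (hFkr : ∀ (r : X) (κ : ℝ),
      ‖deriv (fun κ' => fderiv ℝ (fun r' => F (r', κ')) r) κ‖ ≤ d₄)
    (rt : ℕ → X)
    (hrtmem : ∀ n, n ≤ N → rt n ∈ Xs n)
    (hrtzero : ∀ n, n ≤ N → F (rt n, k n) = 0)
    (hrtstep : ∀ n, n < N → ‖rt (n + 1) - rt n‖ ≤ d₀ * Δk)
    (σ : ℝ) (hσ : 0 < σ)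
    (hlow : ∀ n, n ≤ N → ∀ x : X,
      σ * ‖x‖ ≤ ‖fderiv ℝ (fun r' => F (r', k n)) (rt n) x‖)
    (ε α : ℝ) (hε0 : 0 < ε) (hε1 : ε < 3 / (2 + d₀))
    (hα : 0 < α) (hαle : α ≤ ε * σ ^ 2 / (3 - ε))
    (c₀ q b : ℝ)
    (hc₀ : c₀ = 4 * ε / (3 * d₃ * (9 * d₁ + Real.sqrt α)))
    (hqdef : q = ε * (1 + d₀) / 3)
    (hbdef : b = ε * (2 + d₀) / 3)
    (hstep1 : 9 * d₁ * d₄ / (4 * α) * Δk ≤ ε / 3)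
    (hstep2 : Δk * (1 + d₂ / (2 * d₀ * Real.sqrt α)) ≤ (1 - b) * c₀ * α)
    (r : ℕ → X) (rr : ℕ → ℕ → X)
    (A : ℕ → ℕ → X →L[ℝ] Y)
    (hA : ∀ n, n < N → ∀ j, j < J →
      A n j = fderiv ℝ (fun r' => F (r', k (n + 1))) (rr n j))
    (B : ℕ → ℕ → X →L[ℝ] X)
    (hB : ∀ n, n < N → ∀ j, j < J →
      B n j ∘L (α • (1 : X →L[ℝ] X) +
        ContinuousLinearMap.adjoint (A n j) ∘L A n j) = 1 ∧
      (α • (1 : X →L[ℝ] X) +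
        ContinuousLinearMap.adjoint (A n j) ∘L A n j) ∘L B n j = 1)
    (hrr0 : ∀ n, n < N → rr n 0 = r n)
    (hrrstep : ∀ n, n < N → ∀ j, j < J →
      rr n (j + 1) = rr n j - P (n + 1)
        ((B n j ∘L ContinuousLinearMap.adjoint (A n j)) (F (rr n j, k (n + 1)))))
    (hrJ : ∀ n, n < N → r (n + 1) = rr n J)
    (hr0mem : r 0 ∈ Xs 0)
    (hinit : ‖rt 0 - r 0‖ ≤ d₀ * c₀ * α) :
    (∀ n, n ≤ N → ‖rt n - r n‖ ≤ d₀ * c₀ * α) ∧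
    ‖rt N - r N‖ ≤
      q ^ (J - 1) * Δk * (d₀ + d₂ / (2 * Real.sqrt α)) / (1 - q ^ (J - 1) * b) +
      (q ^ (J - 1) * b) ^ N * (d₀ * c₀ * α) :=
  stmt_15_general N J hJ kl Δk hΔk k hk Xs hXsmono P hP F hF d₀ d₁ d₂ d₃ d₄ hd₀ hd₁ hd₂ hd₃ hFr hFk
    hFrr hFkr rt hrtmem hrtzero hrtstep σ hσ hlow ε α hε0 hε1 hα hαle c₀ q b hc₀ hqdef hbdef hstep1
    hstep2 r rr A hA B hB hrr0 hrrstep hrJ hr0mem hinit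
end

section
/- Convergence rate of the projected recursive Newton method with noisy data (Theorem 2.2, explicit form): let X and Y be real Hilbert spaces, N ≥ 1 and J ≥ 1 integers, Δk > 0 and k_n := k_l + nΔk for n = 0,…,N. Let X₀ ⊆ X₁ ⊆ … ⊆ X_N be closed subspaces of X with orthogonal projections P_n. Let F : X × ℝ → Y be twice continuously Fréchet differentiable with ‖∂_rF(r,k)‖ ≤ d₁, ‖∂_kF(r,k)‖ ≤ d₂, ‖∂²_{rr}F(r,k)‖ ≤ d₃ and ‖∂²_{kr}F(r,k)‖ ≤ d₄ for all (r,k). Suppose r̃₀, …, r̃_N ∈ X satisfy r̃_n ∈ X_n, F(r̃_n, k_n) = 0, and ‖r̃_{n+1} − r̃_n‖ ≤ d₀Δk for a constant d₀ ≥ 1, and suppose σ > 0 satisfies ‖∂_rF(r̃_n, k_n)x‖ ≥ σ‖x‖ for all x ∈ X and all n. Let f₁, …, f_N ∈ Y be noise vectors with ‖f_n‖ ≤ δ̃ for all n. Fix ε with 0 < ε < 3/(2 + d₀), ξ with 0 < ξ < 1, and α > 0 with α ≤ εσ²/(3 − ε); set c₀ := 4ε/(3 d₃ (9 d₁ + √α)),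 q := ε(1 + d₀)/3 and b := ε(2 + d₀)/3, and assume (9d₁d₄/(4α))Δk ≤ ε/3, Δk(d₀ + d₂/(2√α)) ≤ (1 − ξ)(1 − b)d₀c₀α, and δ̃/(2√α) ≤ ξ(1 − b)d₀c₀α. Define the iterates by r⁰_{n+1} := r_n, r^{j+1}_{n+1} := r^j_{n+1} − P_{n+1} R_α(∂_rF(r^j_{n+1}, k_{n+1})) (F(r^j_{n+1}, k_{n+1}) + f_{n+1}) for j = 0,…,J−1, and r_{n+1} := r^J_{n+1}, starting from a given r₀ ∈ X₀. If ‖r̃₀ − r₀‖ ≤ d₀c₀α, then ‖r̃_n − r_n‖ ≤ d₀c₀α for every n = 0,…,N, and the final error satisfies ‖r̃_N − r_N‖ ≤ [δ̃/(2√α(1 − q)) + q^{J−1} Δk (d₀ + d₂/(2√α))] / (1 − q^{J−1}b) + (q^{J−1}b)^N · d₀c₀α. -/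
/-!
Each inner step is a Tikhonov-regularised Newton step `x⁺ = x - P (αI + A*A)⁻¹A* (F x + f)` with
`A = ∂ᵣF(x)`. Since `F(r̃) = 0` and `r̃ - x` lies in the range of `P`, the error `r̃ - x⁺` is the
projection of `α (αI + A*A)⁻¹ (r̃ - x)` plus `(αI + A*A)⁻¹A*` applied to the Taylor remainder and
to the noise. The latter two are controlled by `‖(αI + A*A)⁻¹A*‖ ≤ 1/(2√α)`, the former by
`ε/3 + 2Δ/σ` as soon as `A` is within `Δ ≤ σ/4` of an operator bounded below by `σ`. In the first
inner step `A` is compared with `∂ᵣF(r̃ₙ, kₙ)`, which costs the factor `b`; in the later ones with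
`∂ᵣF(r̃ₙ₊₁, kₙ₊₁)`, which gives the factor `q`. The step-size conditions keep every error below
`d₀c₀α`, so the inner errors obey `eⱼ₊₁ ≤ q eⱼ + δ̃/(2√α)` and the outer errors
`γₙ₊₁ ≤ q^(J-1) b γₙ + C`; unrolling these two linear recursions gives the bound.
-/

open ContinuousLinearMap

section OrthogonalProjection

variable {X : Type*} [NormedAddCommGroup X] [InnerProductSpace ℝ X]

def IsOrthogonalProjectionOnto (S : Submodule ℝ X) (P : X →L[ℝ] X) : Prop :=
  ∀ x, P x ∈ S ∧ x - P x ∈ Sᗮ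

variable {S : Submodule ℝ X} {P : X →L[ℝ] X}

theorem IsOrthogonalProjectionOnto.apply_eq_self (hP : IsOrthogonalProjectionOnto S P) {z : X}
    (hz : z ∈ S) : P z = z := by
  have h : z - P z ∈ S ⊓ Sᗮ := ⟨S.sub_mem hz (hP z).1, (hP z).2⟩
  rw [Submodule.inf_orthogonal_eq_bot, Submodule.mem_bot, sub_eq_zero] at h
  exact h.symm

theorem IsOrthogonalProjectionOnto.norm_apply_le (hP : IsOrthogonalProjectionOnto S P)
    (z : X) : ‖P z‖ ≤ ‖z‖ := by
  have h := norm_add_sq_eq_norm_sq_add_norm_sq_real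
    (Submodule.inner_right_of_mem_orthogonal (hP z).1 (hP z).2)
  rw [add_sub_cancel] at h
  nlinarith [norm_nonneg (P z), norm_nonneg z, mul_self_nonneg ‖z - P z‖]

end OrthogonalProjection

section LowerBounds

variable {X Y : Type*} [NormedAddCommGroup X] [NormedSpace ℝ X]
  [NormedAddCommGroup Y] [NormedSpace ℝ Y] {A A' : X →L[ℝ] Y} {σ : ℝ}

theorem le_norm_apply_of_norm_sub_le {Δ : ℝ} (hA' : ∀ x, σ * ‖x‖ ≤ ‖A' x‖)
    (hΔ : ‖A' - A‖ ≤ Δ) (x : X) : (σ - Δ) * ‖x‖ ≤ ‖A x‖ := by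
  have h1 : ‖A' x‖ ≤ ‖A x‖ + ‖(A' - A) x‖ := by
    simpa using norm_add_le (A x) ((A' - A) x)
  have h2 := ((A' - A).le_opNorm x).trans (mul_le_mul_of_nonneg_right hΔ (norm_nonneg x))
  nlinarith [hA' x]

theorem le_of_forall_mul_norm_le [Nontrivial X] {d : ℝ} (hA : ∀ x, σ * ‖x‖ ≤ ‖A x‖)
    (hd : ‖A‖ ≤ d) : σ ≤ d := by
  obtain ⟨x, hx⟩ := exists_ne (0 : X)
  refine le_of_mul_le_mul_right ((hA x).trans ((A.le_opNorm x).trans ?_)) (norm_pos_iff.2 hx)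
  gcongr

end LowerBounds

theorem le_mul_add_sq_sub {α σ ε Δ : ℝ} (hα : 0 < α) (hσ : 0 < σ) (hε : ε ≤ 1)
    (hαε : 3 * α ≤ ε * (α + σ ^ 2)) (hΔ : 0 ≤ Δ) (hΔσ : 4 * Δ ≤ σ) :
    α ≤ (ε / 3 + 2 * Δ / σ) * (α + (σ - Δ) ^ 2) := by
  have hε0 : 0 < ε := by nlinarith
  -- expanding `(σ - Δ)²` costs `2εσ²Δ`, which the `6Δ(σ - Δ)²` term pays for since `Δ ≤ σ / 4`
  have hsq : ε * σ ^ 2 ≤ 3 * (σ - Δ) ^ 2 := by nlinarith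
  have key : 3 * σ * α ≤ (ε * σ + 6 * Δ) * (α + (σ - Δ) ^ 2) := by
    nlinarith [mul_le_mul_of_nonneg_left hαε hσ.le, mul_le_mul_of_nonneg_left hsq hΔ,
      mul_nonneg (mul_nonneg hε0.le hσ.le) (sq_nonneg Δ), mul_nonneg hΔ hα.le]
  rw [show ε / 3 + 2 * Δ / σ = (ε * σ + 6 * Δ) / (3 * σ) by field_simp; ring,
    div_mul_eq_mul_div, le_div_iff₀ (by positivity)]
  linarith

section TikhonovInverse

variable {X Y : Type*} [NormedAddCommGroup X] [InnerProductSpace ℝ X] [CompleteSpace X]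
  [NormedAddCommGroup Y] [InnerProductSpace ℝ Y] [CompleteSpace Y]
  {α : ℝ} {A : X →L[ℝ] Y} {B : X →L[ℝ] X}

-- `B = (αI + A*A)⁻¹`, so that `B ∘L adjoint A` is the regularized pseudoinverse `R_α(A)`.
def IsTikhonovInverse_s16 (α : ℝ) (A : X →L[ℝ] Y) (B : X →L[ℝ] X) : Prop :=
  B ∘L (α • 1 + adjoint A ∘L A) = 1 ∧ (α • 1 + adjoint A ∘L A) ∘L B = 1

theorem tikhonov_apply_adjoint_apply (hB : B ∘L (α • 1 + adjoint A ∘L A) = 1) (u : X) :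
    B (adjoint A (A u)) = u - α • B u := by
  have h := congr($hB u)
  simp only [comp_apply, add_apply, smul_apply, one_apply_eq_self, map_add, map_smul] at h
  rw [eq_sub_iff_add_eq, add_comm, h]

theorem tikhonov_energy_eq (hB : (α • 1 + adjoint A ∘L A) ∘L B = 1) (v : X) :
    α * ‖B v‖ ^ 2 + ‖A (B v)‖ ^ 2 = inner ℝ v (B v) := by
  have h := congr(inner ℝ ($hB v) (B v))
  simp only [comp_apply, add_apply, smul_apply, one_apply_eq_self, inner_add_left,
    real_inner_smul_left, adjoint_inner_left, real_inner_self_eq_norm_sq] at h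
  exact h

theorem norm_tikhonov_adjoint_le (hα : 0 < α) (hB : (α • 1 + adjoint A ∘L A) ∘L B = 1)
    (y : Y) : ‖B (adjoint A y)‖ ≤ ‖y‖ / (2 * Real.sqrt α) := by
  have henergy := tikhonov_energy_eq hB (adjoint A y)
  rw [adjoint_inner_left] at henergy
  have hCS := real_inner_le_norm y (A (B (adjoint A y)))
  have hs := Real.sq_sqrt hα.le
  rw [le_div_iff₀ (by positivity)]
  -- with `w = B (A* y)`: `α ‖w‖² ≤ ‖y‖ ‖A w‖ - ‖A w‖² ≤ ‖y‖² / 4`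
  nlinarith [sq_nonneg (‖A (B (adjoint A y))‖ - ‖y‖ / 2), norm_nonneg y,
    sq_nonneg (Real.sqrt α * ‖B (adjoint A y)‖ - ‖y‖ / 2)]

theorem add_sq_mul_norm_tikhonov_le (hB : (α • 1 + adjoint A ∘L A) ∘L B = 1) {τ : ℝ}
    (hτ : 0 ≤ τ) (hA : ∀ x, τ * ‖x‖ ≤ ‖A x‖) (v : X) : (α + τ ^ 2) * ‖B v‖ ≤ ‖v‖ := by
  rcases (norm_nonneg (B v)).eq_or_lt with h0 | hpos
  · rw [← h0, mul_zero]; exact norm_nonneg v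
  have henergy := tikhonov_energy_eq hB v
  have hCS := real_inner_le_norm v (B v)
  have hsq : (τ * ‖B v‖) ^ 2 ≤ ‖A (B v)‖ ^ 2 := pow_le_pow_left₀ (by positivity) (hA _) 2
  refine le_of_mul_le_mul_right ?_ hpos
  nlinarith

theorem mul_norm_tikhonov_le (hα : 0 < α) (hB : (α • 1 + adjoint A ∘L A) ∘L B = 1)
    {A' : X →L[ℝ] Y} {σ ε Δ : ℝ} (hσ : 0 < σ) (hε : ε ≤ 1) (hαε : 3 * α ≤ ε * (α + σ ^ 2))
    (hΔ : 0 ≤ Δ) (hΔσ : 4 * Δ ≤ σ) (hA' : ∀ x, σ * ‖x‖ ≤ ‖A' x‖) (hA'A : ‖A' - A‖ ≤ Δ)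
    (v : X) : α * ‖B v‖ ≤ (ε / 3 + 2 * Δ / σ) * ‖v‖ :=
  calc α * ‖B v‖ ≤ (ε / 3 + 2 * Δ / σ) * ((α + (σ - Δ) ^ 2) * ‖B v‖) := by
        rw [← mul_assoc]
        exact mul_le_mul_of_nonneg_right (le_mul_add_sq_sub hα hσ hε hαε hΔ hΔσ)
          (norm_nonneg _)
    _ ≤ (ε / 3 + 2 * Δ / σ) * ‖v‖ := by
        gcongr
        · have : 0 < ε := by nlinarith
          positivity
        · exact add_sq_mul_norm_tikhonov_le hB (by linarith)
            (le_norm_apply_of_norm_sub_le hA' hA'A) v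

variable {S : Submodule ℝ X} {P : X →L[ℝ] X} {x xt : X}

theorem sub_newtonStep_eq (hP : IsOrthogonalProjectionOnto S P)
    (hB : B ∘L (α • 1 + adjoint A ∘L A) = 1) (hx : x ∈ S) (hxt : xt ∈ S) (y : Y) :
    xt - (x - P (B (adjoint A y))) = P (α • B (xt - x) + B (adjoint A (y - A (x - xt)))) := by
  have hPx : P (xt - x) = xt - x := hP.apply_eq_self (S.sub_mem hxt hx)
  rw [map_sub (adjoint A), map_sub B (adjoint A y), tikhonov_apply_adjoint_apply hB,
    ← neg_sub x xt, map_neg, smul_neg,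
    show -(α • B (x - xt)) + (B (adjoint A y) - ((x - xt) - α • B (x - xt)))
      = B (adjoint A y) + (xt - x) by abel, map_add, hPx]
  abel

theorem norm_sub_newtonStep_le (hα : 0 < α) (hP : IsOrthogonalProjectionOnto S P)
    (hB : IsTikhonovInverse_s16 α A B) (hx : x ∈ S) (hxt : xt ∈ S) (y : Y) :
    ‖xt - (x - P (B (adjoint A y)))‖ ≤
      α * ‖B (xt - x)‖ + ‖y - A (x - xt)‖ / (2 * Real.sqrt α) := by
  rw [sub_newtonStep_eq hP hB.1 hx hxt]
  refine (hP.norm_apply_le _).trans ((norm_add_le _ _).trans (add_le_add ?_ ?_))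
  · rw [norm_smul, Real.norm_of_nonneg hα.le]
  · exact norm_tikhonov_adjoint_le hα hB.2 _

end TikhonovInverse

section PartialDerivatives

variable {X Y : Type*} [NormedAddCommGroup X] [NormedSpace ℝ X]
  [NormedAddCommGroup Y] [NormedSpace ℝ Y] {F : X × ℝ → Y}

noncomputable def rDeriv (F : X × ℝ → Y) (r : X) (κ : ℝ) : X →L[ℝ] Y :=
  fderiv ℝ (fun r' => F (r', κ)) r

theorem contDiff_rDeriv (hF : ContDiff ℝ 2 F) :
    ContDiff ℝ 1 (fun p : X × ℝ => rDeriv F p.1 p.2) :=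
  ContDiff.fderiv (f := fun (p : X × ℝ) (r : X) => F (r, p.2))
    (hF.comp (by fun_prop)) contDiff_fst le_rfl

theorem norm_rDeriv_sub_rDeriv_le_of_fst (hF : ContDiff ℝ 2 F) {d₃ : ℝ}
    (hFrr : ∀ r κ, ‖fderiv ℝ (fun r' => rDeriv F r' κ) r‖ ≤ d₃) (κ : ℝ) (x y : X) :
    ‖rDeriv F y κ - rDeriv F x κ‖ ≤ d₃ * ‖y - x‖ := by
  have hdiff : Differentiable ℝ (fun r => rDeriv F r κ) :=
    ((contDiff_rDeriv hF).differentiable one_ne_zero).comp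
      (differentiable_id.prodMk (differentiable_const κ))
  exact convex_univ.norm_image_sub_le_of_norm_fderiv_le (fun z _ => hdiff z)
    (fun z _ => hFrr z κ) (Set.mem_univ x) (Set.mem_univ y)

theorem norm_rDeriv_sub_rDeriv_le_of_snd (hF : ContDiff ℝ 2 F) {d₄ : ℝ}
    (hFkr : ∀ r κ, ‖deriv (fun κ' => rDeriv F r κ') κ‖ ≤ d₄) (r : X) (κ κ' : ℝ) :
    ‖rDeriv F r κ' - rDeriv F r κ‖ ≤ d₄ * |κ' - κ| := by
  have hdiff : Differentiable ℝ (fun κ => rDeriv F r κ) :=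
    ((contDiff_rDeriv hF).differentiable one_ne_zero).comp
      ((differentiable_const r).prodMk differentiable_id)
  exact convex_univ.norm_image_sub_le_of_norm_deriv_le (fun t _ => hdiff t)
    (fun t _ => hFkr r t) (Set.mem_univ κ) (Set.mem_univ κ')

theorem norm_sub_sub_rDeriv_le (hF : ContDiff ℝ 2 F) {d₃ : ℝ}
    (hFrr : ∀ r κ, ‖fderiv ℝ (fun r' => rDeriv F r' κ) r‖ ≤ d₃) (κ : ℝ) (x y : X) :
    ‖F (y, κ) - F (x, κ) - rDeriv F x κ (y - x)‖ ≤ d₃ * ‖y - x‖ ^ 2 := by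
  have hd₃ : 0 ≤ d₃ := (hFrr x κ).trans' (by positivity)
  have hdiff : Differentiable ℝ (fun r => F (r, κ)) :=
    (hF.differentiable (by norm_num)).comp (by fun_prop)
  have h := (convex_closedBall x ‖y - x‖).norm_image_sub_le_of_norm_fderiv_le'
    (fun z _ => hdiff z) (fun z hz => (norm_rDeriv_sub_rDeriv_le_of_fst hF hFrr κ x z).trans
      (mul_le_mul_of_nonneg_left (mem_closedBall_iff_norm.1 hz) hd₃))
    (Metric.mem_closedBall_self (norm_nonneg _)) (mem_closedBall_iff_norm.2 le_rfl)
  rwa [mul_assoc, ← sq] at h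

end PartialDerivatives

section LinearRecursion

theorem le_pow_mul_add_of_le_mul_add {u : ℕ → ℝ} {a L : ℝ} {m : ℕ} (ha : 0 ≤ a)
    (h : ∀ i < m, u (i + 1) ≤ a * u i + (1 - a) * L) :
    u m ≤ a ^ m * u 0 + (1 - a ^ m) * L := by
  induction m with
  | zero => simp
  | succ m ih =>
    calc u (m + 1) ≤ a * u m + (1 - a) * L := h m (Nat.lt_succ_self m)
      _ ≤ a * (a ^ m * u 0 + (1 - a ^ m) * L) + (1 - a) * L := by
          gcongr; exact ih fun i hi => h i (hi.trans (Nat.lt_succ_self m))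
      _ = a ^ (m + 1) * u 0 + (1 - a ^ (m + 1)) * L := by ring

theorem le_pow_mul_add_div_of_le_mul_add {e : ℕ → ℝ} {q δ c M : ℝ} {m : ℕ} (hq₀ : 0 ≤ q)
    (hq₁ : q < 1) (hδ : 0 ≤ δ) (hδc : δ ≤ (1 - q) * c) (hc : e 0 ≤ c) (hM : e 0 ≤ M + δ)
    (h : ∀ i < m, e i ≤ c → e (i + 1) ≤ q * e i + δ) :
    e m ≤ c ∧ e m ≤ q ^ m * M + δ / (1 - q) := by
  set L := δ / (1 - q)
  have hL : (1 - q) * L = δ := mul_div_cancel₀ _ (by linarith)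
  have hδL : δ ≤ L := le_div_self hδ (by linarith) (by linarith)
  have hLc : L ≤ c := (div_le_iff₀' (by linarith)).2 hδc
  have hinv : ∀ i ≤ m, e i ≤ c := by
    intro i hi
    induction i with
    | zero => exact hc
    | succ i ih =>
      calc e (i + 1) ≤ q * e i + (1 - q) * L := hL ▸ h i hi (ih (Nat.le_of_succ_le hi))
        _ ≤ q * c + (1 - q) * c := by gcongr; exact ih (Nat.le_of_succ_le hi)
        _ = c := by ring
  have hrec := le_pow_mul_add_of_le_mul_add (u := e) (m := m) hq₀ fun i hi =>
    hL ▸ h i hi (hinv i hi.le)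
  refine ⟨hinv m le_rfl, hrec.trans ?_⟩
  have hpow : 0 ≤ q ^ m := pow_nonneg hq₀ m
  nlinarith

theorem le_div_add_pow_mul_of_step {γ : ℕ → ℝ} {p : ℕ → Prop} {N : ℕ} {θ C c : ℝ}
    (hθ₀ : 0 ≤ θ) (hθ₁ : θ < 1) (hC : 0 ≤ C) (h₀ : γ 0 ≤ c) (hp₀ : p 0)
    (h : ∀ n < N, γ n ≤ c → p n → γ (n + 1) ≤ c ∧ p (n + 1) ∧ γ (n + 1) ≤ θ * γ n + C) :
    (∀ n ≤ N, γ n ≤ c) ∧ γ N ≤ C / (1 - θ) + θ ^ N * c := by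
  have hinv : ∀ n ≤ N, γ n ≤ c ∧ p n := by
    intro n hn
    induction n with
    | zero => exact ⟨h₀, hp₀⟩
    | succ n ih =>
      obtain ⟨hγ, hp⟩ := ih (Nat.le_of_succ_le hn)
      exact ⟨(h n hn hγ hp).1, (h n hn hγ hp).2.1⟩
  have hC' : (1 - θ) * (C / (1 - θ)) = C := mul_div_cancel₀ _ (by linarith)
  have hrec := le_pow_mul_add_of_le_mul_add (u := γ) (m := N) hθ₀ fun n hn =>
    hC' ▸ (h n hn (hinv n hn.le).1 (hinv n hn.le).2).2.2
  refine ⟨fun n hn => (hinv n hn).1, hrec.trans ?_⟩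
  have hpow : 0 ≤ θ ^ N := pow_nonneg hθ₀ N
  have hL : 0 ≤ C / (1 - θ) := div_nonneg hC (by linarith)
  nlinarith [h₀]

end LinearRecursion

section RecursiveNewton

variable {X Y : Type*} [NormedAddCommGroup X] [InnerProductSpace ℝ X] [CompleteSpace X]
  [NormedAddCommGroup Y] [InnerProductSpace ℝ Y] [CompleteSpace Y]
  {S : Submodule ℝ X} {P : X →L[ℝ] X} {F : X × ℝ → Y} {α σ ε d₃ δ κ : ℝ} {xt : X} {f : Y}

theorem norm_sub_newtonStep_le_of_root {Δ : ℝ} {x : X} {A' : X →L[ℝ] Y} {B : X →L[ℝ] X}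
    (hP : IsOrthogonalProjectionOnto S P) (hF : ContDiff ℝ 2 F)
    (hFrr : ∀ r κ, ‖fderiv ℝ (fun r' => rDeriv F r' κ) r‖ ≤ d₃)
    (hroot : F (xt, κ) = 0) (hx : x ∈ S) (hxt : xt ∈ S) (hB : IsTikhonovInverse_s16 α (rDeriv F x κ) B)
    (hα : 0 < α) (hσ : 0 < σ) (hε : ε ≤ 1) (hαε : 3 * α ≤ ε * (α + σ ^ 2))
    (hA' : ∀ v, σ * ‖v‖ ≤ ‖A' v‖) (hA'A : ‖A' - rDeriv F x κ‖ ≤ Δ) (hΔ : 0 ≤ Δ)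
    (hΔσ : 4 * Δ ≤ σ) (hf : ‖f‖ ≤ δ) :
    ‖xt - (x - P ((B ∘L adjoint (rDeriv F x κ)) (F (x, κ) + f)))‖ ≤
      (ε / 3 + 2 * Δ / σ + d₃ * ‖xt - x‖ / (2 * Real.sqrt α)) * ‖xt - x‖ +
        δ / (2 * Real.sqrt α) := by
  have hlin : ‖F (x, κ) + f - rDeriv F x κ (x - xt)‖ ≤ d₃ * ‖xt - x‖ ^ 2 + δ := by
    have hsplit : F (x, κ) + f - rDeriv F x κ (x - xt)
        = -(F (xt, κ) - F (x, κ) - rDeriv F x κ (xt - x)) + f := by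
      rw [hroot, ← neg_sub xt x, map_neg]; abel
    rw [hsplit]
    exact (norm_add_le _ _).trans
      (add_le_add (by rw [norm_neg]; exact norm_sub_sub_rDeriv_le hF hFrr κ x xt) hf)
  have hreg := mul_norm_tikhonov_le hα hB.2 hσ hε hαε hΔ hΔσ hA' hA'A (xt - x)
  calc _ ≤ α * ‖B (xt - x)‖ + ‖F (x, κ) + f - rDeriv F x κ (x - xt)‖ / (2 * Real.sqrt α) :=
        norm_sub_newtonStep_le hα hP hB hx hxt _
    _ ≤ (ε / 3 + 2 * Δ / σ) * ‖xt - x‖ + (d₃ * ‖xt - x‖ ^ 2 + δ) / (2 * Real.sqrt α) := by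
        gcongr
    _ = _ := by ring

theorem norm_sub_newtonStep_le_of_near_root {c q : ℝ} {x : X} {B : X →L[ℝ] X}
    (hP : IsOrthogonalProjectionOnto S P) (hF : ContDiff ℝ 2 F)
    (hFrr : ∀ r κ, ‖fderiv ℝ (fun r' => rDeriv F r' κ) r‖ ≤ d₃)
    (hroot : F (xt, κ) = 0) (hx : x ∈ S) (hxt : xt ∈ S) (hB : IsTikhonovInverse_s16 α (rDeriv F x κ) B)
    (hα : 0 < α) (hσ : 0 < σ) (hε : ε ≤ 1) (hαε : 3 * α ≤ ε * (α + σ ^ 2))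
    (hlow : ∀ v, σ * ‖v‖ ≤ ‖rDeriv F xt κ v‖) (hσc : 4 * (d₃ * c) ≤ σ)
    (hq : ε / 3 + 2 * (d₃ * c) / σ + d₃ * c / (2 * Real.sqrt α) ≤ q)
    (hxc : ‖xt - x‖ ≤ c) (hf : ‖f‖ ≤ δ) :
    ‖xt - (x - P ((B ∘L adjoint (rDeriv F x κ)) (F (x, κ) + f)))‖ ≤
      q * ‖xt - x‖ + δ / (2 * Real.sqrt α) := by
  have hd₃ : 0 ≤ d₃ := (hFrr 0 0).trans' (by positivity)
  refine (norm_sub_newtonStep_le_of_root hP hF hFrr hroot hx hxt hB hα hσ hε hαε hlow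
    (norm_rDeriv_sub_rDeriv_le_of_fst hF hFrr κ x xt) (by positivity)
    (hσc.trans' (by gcongr)) hf).trans ?_
  gcongr
  exact hq.trans' (by gcongr)

theorem norm_sub_newtonStep_le_of_near_prev_root {d₄ κ₀ Δk c b : ℝ} {r₀ x : X}
    {B : X →L[ℝ] X} (hP : IsOrthogonalProjectionOnto S P) (hF : ContDiff ℝ 2 F)
    (hFrr : ∀ r κ, ‖fderiv ℝ (fun r' => rDeriv F r' κ) r‖ ≤ d₃)
    (hFkr : ∀ r κ, ‖deriv (fun κ' => rDeriv F r κ') κ‖ ≤ d₄)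
    (hroot : F (xt, κ) = 0) (hx : x ∈ S) (hxt : xt ∈ S) (hB : IsTikhonovInverse_s16 α (rDeriv F x κ) B)
    (hα : 0 < α) (hσ : 0 < σ) (hε : ε ≤ 1) (hαε : 3 * α ≤ ε * (α + σ ^ 2))
    (hlow : ∀ v, σ * ‖v‖ ≤ ‖rDeriv F r₀ κ₀ v‖) (hκ : |κ - κ₀| ≤ Δk)
    (hσc : 4 * (d₃ * c + d₄ * Δk) ≤ σ)
    (hb : ε / 3 + 2 * (d₃ * c + d₄ * Δk) / σ + d₃ * (2 * c) / (2 * Real.sqrt α) ≤ b)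
    (hr₀ : ‖r₀ - x‖ ≤ c) (hxc : ‖xt - x‖ ≤ 2 * c) (hf : ‖f‖ ≤ δ) :
    ‖xt - (x - P ((B ∘L adjoint (rDeriv F x κ)) (F (x, κ) + f)))‖ ≤
      b * ‖xt - x‖ + δ / (2 * Real.sqrt α) := by
  have hd₃ : 0 ≤ d₃ := (hFrr 0 0).trans' (by positivity)
  have hd₄ : 0 ≤ d₄ := (hFkr 0 0).trans' (by positivity)
  have hΔk : 0 ≤ Δk := (abs_nonneg _).trans hκ
  have hc : 0 ≤ c := (norm_nonneg _).trans hr₀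
  have hA' : ‖rDeriv F r₀ κ₀ - rDeriv F x κ‖ ≤ d₃ * c + d₄ * Δk := by
    rw [← sub_add_sub_cancel _ (rDeriv F x κ₀)]
    refine (norm_add_le _ _).trans (add_le_add ?_ ?_)
    · exact (norm_rDeriv_sub_rDeriv_le_of_fst hF hFrr κ₀ x r₀).trans (by gcongr)
    · rw [norm_sub_rev]
      exact (norm_rDeriv_sub_rDeriv_le_of_snd hF hFkr x κ₀ κ).trans (by gcongr)
  refine (norm_sub_newtonStep_le_of_root hP hF hFrr hroot hx hxt hB hα hσ hε hαε hlow hA'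
    (by positivity) hσc hf).trans ?_
  gcongr
  exact hb.trans' (by gcongr)

theorem norm_sub_sweep_le {d₄ κ₀ Δk ρ c q b : ℝ} {r₀ r : X} {J : ℕ} {x : ℕ → X}
    {A : ℕ → X →L[ℝ] Y} {B : ℕ → X →L[ℝ] X}
    (hP : IsOrthogonalProjectionOnto S P) (hF : ContDiff ℝ 2 F)
    (hFrr : ∀ r κ, ‖fderiv ℝ (fun r' => rDeriv F r' κ) r‖ ≤ d₃)
    (hFkr : ∀ r κ, ‖deriv (fun κ' => rDeriv F r κ') κ‖ ≤ d₄)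
    (hroot : F (xt, κ) = 0) (hxt : xt ∈ S) (hr : r ∈ S)
    (hlow₀ : ∀ v, σ * ‖v‖ ≤ ‖rDeriv F r₀ κ₀ v‖) (hlow : ∀ v, σ * ‖v‖ ≤ ‖rDeriv F xt κ v‖)
    (hκ : |κ - κ₀| ≤ Δk) (hρ : ‖xt - r₀‖ ≤ ρ)
    (hx₀ : x 0 = r) (hA : ∀ j < J, A j = rDeriv F (x j) κ)
    (hB : ∀ j < J, IsTikhonovInverse_s16 α (A j) (B j))
    (hx : ∀ j < J, x (j + 1) = x j - P ((B j ∘L adjoint (A j)) (F (x j, κ) + f)))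
    (hf : ‖f‖ ≤ δ) (hJ : 1 ≤ J)
    (hα : 0 < α) (hσ : 0 < σ) (hε : ε ≤ 1) (hαε : 3 * α ≤ ε * (α + σ ^ 2))
    (hσc : 4 * (d₃ * c + d₄ * Δk) ≤ σ)
    (hb : ε / 3 + 2 * (d₃ * c + d₄ * Δk) / σ + d₃ * (2 * c) / (2 * Real.sqrt α) ≤ b)
    (hq : ε / 3 + 2 * (d₃ * c) / σ + d₃ * c / (2 * Real.sqrt α) ≤ q)
    (hq₀ : 0 ≤ q) (hq₁ : q < 1) (hqb : q ≤ b) (hb₁ : b ≤ 1)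
    (hρδ : ρ + δ / (2 * Real.sqrt α) ≤ (1 - b) * c) (hr₀ : ‖r₀ - r‖ ≤ c) :
    x J ∈ S ∧ ‖xt - x J‖ ≤ c ∧
      ‖xt - x J‖ ≤ q ^ (J - 1) * (b * ‖r₀ - r‖ + ρ) + δ / (2 * Real.sqrt α) / (1 - q) := by
  have hd₃ : 0 ≤ d₃ := (hFrr 0 0).trans' (by positivity)
  have hd₄ : 0 ≤ d₄ := (hFkr 0 0).trans' (by positivity)
  have hΔk : 0 ≤ Δk := (abs_nonneg _).trans hκ
  have hδ : 0 ≤ δ / (2 * Real.sqrt α) := div_nonneg ((norm_nonneg f).trans hf) (by positivity)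
  have hρ₀ : 0 ≤ ρ := (norm_nonneg _).trans hρ
  have hc : 0 ≤ c := (norm_nonneg _).trans hr₀
  have hb₀ : 0 ≤ b := hq₀.trans hqb
  have hmem : ∀ j ≤ J, x j ∈ S := by
    intro j hj
    induction j with
    | zero => rwa [hx₀]
    | succ j ih => rw [hx j hj]; exact S.sub_mem (ih (Nat.le_of_succ_le hj)) (hP _).1
  have he₀ : ‖xt - x 0‖ ≤ ‖r₀ - r‖ + ρ := by
    rw [hx₀, ← sub_add_sub_cancel xt r₀ r]
    exact (norm_add_le _ _).trans (by linarith)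
  have he₁ : ‖xt - x 1‖ ≤ b * (‖r₀ - r‖ + ρ) + δ / (2 * Real.sqrt α) := by
    rw [hx 0 hJ, hA 0 hJ]
    refine (norm_sub_newtonStep_le_of_near_prev_root hP hF hFrr hFkr hroot
      (hmem 0 (Nat.zero_le J)) hxt (hA 0 hJ ▸ hB 0 hJ) hα hσ hε hαε hlow₀ hκ hσc hb
      (hx₀ ▸ hr₀) (by nlinarith) hf).trans ?_
    gcongr
  have hlater : ∀ j < J, ‖xt - x j‖ ≤ c →
      ‖xt - x (j + 1)‖ ≤ q * ‖xt - x j‖ + δ / (2 * Real.sqrt α) := by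
    intro j hj hej
    rw [hx j hj, hA j hj]
    exact norm_sub_newtonStep_le_of_near_root hP hF hFrr hroot (hmem j hj.le) hxt
      (hA j hj ▸ hB j hj) hα hσ hε hαε hlow (hσc.trans' (by nlinarith [mul_nonneg hd₄ hΔk]))
      hq hej hf
  have hsweep := le_pow_mul_add_div_of_le_mul_add (e := fun i => ‖xt - x (i + 1)‖)
    (m := J - 1) (M := b * ‖r₀ - r‖ + ρ) hq₀ hq₁ hδ (by nlinarith) (by nlinarith)
    (by nlinarith) fun i hi hei => hlater (i + 1) (by omega) hei
  rw [Nat.sub_add_cancel hJ] at hsweep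
  exact ⟨hmem J le_rfl, hsweep⟩

end RecursiveNewton

theorem rate_bounds_of_lt_div {ε d₀ q b : ℝ} (hd₀ : 1 ≤ d₀) (hε : 0 < ε)
    (hεd₀ : ε < 3 / (2 + d₀)) (hq : q = ε * (1 + d₀) / 3) (hb : b = ε * (2 + d₀) / 3) :
    ε ≤ 1 ∧ 0 ≤ q ∧ q ≤ b ∧ b < 1 := by
  rw [lt_div_iff₀ (by linarith)] at hεd₀
  subst hq hb
  exact ⟨by nlinarith, by positivity, by linarith, by linarith⟩

theorem regularization_le {α σ ε : ℝ} (hε : ε ≤ 1) (hαle : α ≤ ε * σ ^ 2 / (3 - ε)) :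
    3 * α ≤ ε * (α + σ ^ 2) ∧ 2 * α ≤ σ ^ 2 := by
  rw [le_div_iff₀ (by linarith)] at hαle
  constructor <;> nlinarith

theorem mul_mul_le_of_eq_div {ε d₁ d₃ α c₀ : ℝ} (hε : 0 ≤ ε) (hd₁ : 0 < d₁) (hd₃ : 0 < d₃)
    (hc₀ : c₀ = 4 * ε / (3 * d₃ * (9 * d₁ + Real.sqrt α))) : 27 * d₁ * (d₃ * c₀) ≤ 4 * ε := by
  rw [hc₀, mul_div_assoc', mul_div_assoc', div_le_iff₀ (by positivity)]
  nlinarith [mul_nonneg (mul_nonneg hε hd₃.le) (Real.sqrt_nonneg α)]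

theorem div_le_div_of_sq_le {α σ d₁ : ℝ} (hα : 0 < α) (hσ : 0 < σ) (hσα : 2 * α ≤ σ ^ 2)
    (hσd₁ : σ ≤ d₁) : 2 / σ ≤ d₁ / α ∧ 1 / (2 * Real.sqrt α) ≤ d₁ / α / 2 := by
  have hs : Real.sqrt α ≤ d₁ := (Real.sqrt_le_iff.2 ⟨hσ.le, by linarith⟩).trans hσd₁
  constructor
  · rw [div_le_div_iff₀ hσ hα]; nlinarith
  · rw [div_div, div_le_div_iff₀ (by positivity) (by positivity)]
    nlinarith [Real.sq_sqrt hα.le, mul_le_mul_of_nonneg_left hs (Real.sqrt_nonneg α)]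

theorem newton_factor_bounds {α σ ε d₀ d₁ d₃ d₄ Δk c : ℝ} (hα : 0 < α) (hσ : 0 < σ)
    (hσα : 2 * α ≤ σ ^ 2) (hσd₁ : σ ≤ d₁) (hε : 0 < ε) (hd₀ : 0 ≤ d₀)
    (hεd₀ : ε * (1 + d₀) ≤ 3) (hd₃ : 0 ≤ d₃) (hd₄ : 0 ≤ d₄) (hc : 0 ≤ c) (hΔk : 0 ≤ Δk)
    (hcsmall : 27 * d₁ * (d₃ * c) ≤ 4 * (ε * d₀) * α)
    (hΔksmall : 27 * d₁ * (d₄ * Δk) ≤ 4 * ε * α) :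
    4 * (d₃ * c + d₄ * Δk) ≤ σ ∧
    ε / 3 + 2 * (d₃ * c + d₄ * Δk) / σ + d₃ * (2 * c) / (2 * Real.sqrt α) ≤ ε * (2 + d₀) / 3 ∧
    ε / 3 + 2 * (d₃ * c) / σ + d₃ * c / (2 * Real.sqrt α) ≤ ε * (1 + d₀) / 3 := by
  obtain ⟨hσinv, hsinv⟩ := div_le_div_of_sq_le hα hσ hσα hσd₁
  have hT : d₁ / α * (d₃ * c) ≤ 4 / 27 * (ε * d₀) := by
    rw [div_mul_eq_mul_div, div_le_iff₀ hα]; linarith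
  have hU : d₁ / α * (d₄ * Δk) ≤ 4 / 27 * ε := by
    rw [div_mul_eq_mul_div, div_le_iff₀ hα]; linarith
  have hTU : 2 * (d₃ * c + d₄ * Δk) / σ ≤ 4 / 27 * (ε * (1 + d₀)) :=
    calc 2 * (d₃ * c + d₄ * Δk) / σ = 2 / σ * (d₃ * c + d₄ * Δk) := by ring
      _ ≤ d₁ / α * (d₃ * c + d₄ * Δk) := by gcongr
      _ ≤ 4 / 27 * (ε * (1 + d₀)) := by linarith
  have hT₁ : 2 * (d₃ * c) / σ ≤ 4 / 27 * (ε * d₀) :=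
    calc 2 * (d₃ * c) / σ = 2 / σ * (d₃ * c) := by ring
      _ ≤ d₁ / α * (d₃ * c) := by gcongr
      _ ≤ 4 / 27 * (ε * d₀) := hT
  have hT₂ : d₃ * c / (2 * Real.sqrt α) ≤ 2 / 27 * (ε * d₀) :=
    calc d₃ * c / (2 * Real.sqrt α) = 1 / (2 * Real.sqrt α) * (d₃ * c) := by ring
      _ ≤ d₁ / α / 2 * (d₃ * c) := by gcongr
      _ ≤ 2 / 27 * (ε * d₀) := by linarith
  have hεd₀' : 0 ≤ ε * d₀ := by positivity
  refine ⟨?_, ?_, by linarith⟩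
  · rw [div_le_iff₀ hσ] at hTU; nlinarith
  · rw [show d₃ * (2 * c) / (2 * Real.sqrt α) = 2 * (d₃ * c / (2 * Real.sqrt α)) by ring]
    linarith

theorem stmt_16_general {X Y : Type*}
    [NormedAddCommGroup X] [InnerProductSpace ℝ X] [CompleteSpace X]
    [NormedAddCommGroup Y] [InnerProductSpace ℝ Y] [CompleteSpace Y]
    (N J : ℕ) (hJ : 1 ≤ J)
    (kl Δk : ℝ) (hΔk : 0 < Δk)
    (k : ℕ → ℝ) (hk : ∀ n : ℕ, k n = kl + n * Δk)
    (Xs : ℕ → Submodule ℝ X)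
    (hXsmono : ∀ n, n < N → Xs n ≤ Xs (n + 1))
    (P : ℕ → X →L[ℝ] X)
    (hP : ∀ n, n ≤ N → ∀ x : X, P n x ∈ Xs n ∧ x - P n x ∈ (Xs n)ᗮ)
    (F : X × ℝ → Y) (hF : ContDiff ℝ 2 F)
    (d₀ d₁ d₂ d₃ d₄ : ℝ) (hd₀ : 1 ≤ d₀) (hd₁ : 0 < d₁) (hd₂ : 0 < d₂)
    (hd₃ : 0 < d₃) (hd₄ : 0 < d₄)
    (hFr : ∀ (r : X) (κ : ℝ), ‖fderiv ℝ (fun r' => F (r', κ)) r‖ ≤ d₁)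
    (hFrr : ∀ (r : X) (κ : ℝ),
      ‖fderiv ℝ (fun r' => fderiv ℝ (fun r'' => F (r'', κ)) r') r‖ ≤ d₃)
    (hFkr : ∀ (r : X) (κ : ℝ),
      ‖deriv (fun κ' => fderiv ℝ (fun r' => F (r', κ')) r) κ‖ ≤ d₄)
    (rt : ℕ → X)
    (hrtmem : ∀ n, n ≤ N → rt n ∈ Xs n)
    (hrtzero : ∀ n, n ≤ N → F (rt n, k n) = 0)
    (hrtstep : ∀ n, n < N → ‖rt (n + 1) - rt n‖ ≤ d₀ * Δk)
    (σ : ℝ) (hσ : 0 < σ)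
    (hlow : ∀ n, n ≤ N → ∀ x : X,
      σ * ‖x‖ ≤ ‖fderiv ℝ (fun r' => F (r', k n)) (rt n) x‖)
    (δt : ℝ) (hδt : 0 ≤ δt)
    (f : ℕ → Y) (hf : ∀ n, 1 ≤ n → n ≤ N → ‖f n‖ ≤ δt)
    (ε ξ α : ℝ) (hε0 : 0 < ε) (hε1 : ε < 3 / (2 + d₀))
    (hα : 0 < α) (hαle : α ≤ ε * σ ^ 2 / (3 - ε))
    (c₀ q b : ℝ)
    (hc₀ : c₀ = 4 * ε / (3 * d₃ * (9 * d₁ + Real.sqrt α)))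
    (hqdef : q = ε * (1 + d₀) / 3)
    (hbdef : b = ε * (2 + d₀) / 3)
    (hstep1 : 9 * d₁ * d₄ / (4 * α) * Δk ≤ ε / 3)
    (hstep2 : Δk * (d₀ + d₂ / (2 * Real.sqrt α)) ≤ (1 - ξ) * (1 - b) * d₀ * c₀ * α)
    (hstep3 : δt / (2 * Real.sqrt α) ≤ ξ * (1 - b) * d₀ * c₀ * α)
    (r : ℕ → X) (rr : ℕ → ℕ → X)
    (A : ℕ → ℕ → X →L[ℝ] Y)
    (hA : ∀ n, n < N → ∀ j, j < J →
      A n j = fderiv ℝ (fun r' => F (r', k (n + 1))) (rr n j))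
    (B : ℕ → ℕ → X →L[ℝ] X)
    (hB : ∀ n, n < N → ∀ j, j < J →
      B n j ∘L (α • (1 : X →L[ℝ] X) +
        ContinuousLinearMap.adjoint (A n j) ∘L A n j) = 1 ∧
      (α • (1 : X →L[ℝ] X) +
        ContinuousLinearMap.adjoint (A n j) ∘L A n j) ∘L B n j = 1)
    (hrr0 : ∀ n, n < N → rr n 0 = r n)
    (hrrstep : ∀ n, n < N → ∀ j, j < J →
      rr n (j + 1) = rr n j - P (n + 1)
        ((B n j ∘L ContinuousLinearMap.adjoint (A n j))
          (F (rr n j, k (n + 1)) + f (n + 1))))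
    (hrJ : ∀ n, n < N → r (n + 1) = rr n J)
    (hr0mem : r 0 ∈ Xs 0)
    (hinit : ‖rt 0 - r 0‖ ≤ d₀ * c₀ * α) :
    (∀ n, n ≤ N → ‖rt n - r n‖ ≤ d₀ * c₀ * α) ∧
    ‖rt N - r N‖ ≤
      (δt / (2 * Real.sqrt α * (1 - q)) +
        q ^ (J - 1) * Δk * (d₀ + d₂ / (2 * Real.sqrt α))) / (1 - q ^ (J - 1) * b) +
      (q ^ (J - 1) * b) ^ N * (d₀ * c₀ * α) := by
  obtain ⟨hε, hq₀, hqb, hb₁⟩ := rate_bounds_of_lt_div hd₀ hε0 hε1 hqdef hbdef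
  obtain ⟨hαε, hσα⟩ := regularization_le hε hαle
  have hq₁ : 0 < 1 - q := by linarith
  have hb₀ : 0 ≤ b := hq₀.trans hqb
  have hρδ : d₀ * Δk + δt / (2 * Real.sqrt α) ≤ (1 - b) * (d₀ * c₀ * α) := by
    have : 0 ≤ Δk * (d₂ / (2 * Real.sqrt α)) := by positivity
    linarith
  refine le_div_add_pow_mul_of_step (p := fun n => r n ∈ Xs n) (by positivity)
    ((mul_le_of_le_one_left hb₀ (pow_le_one₀ hq₀ (by linarith))).trans_lt hb₁) (by positivity)
    hinit hr0mem fun n hn hγ hr => ?_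
  rw [hrJ n hn]
  -- `σ ≤ d₁` needs a nonzero vector; in the zero space every error vanishes
  rcases subsingleton_or_nontrivial X with hX | hX
  · have h0 : ‖rt (n + 1) - rr n J‖ = 0 := by
      rw [Subsingleton.elim (rt (n + 1) - rr n J) 0, norm_zero]
    exact ⟨h0 ▸ (norm_nonneg _).trans hγ, Subsingleton.elim 0 (rr n J) ▸ (Xs (n + 1)).zero_mem,
      h0 ▸ by positivity⟩
  have hσd₁ : σ ≤ d₁ := le_of_forall_mul_norm_le (hlow 0 (Nat.zero_le N)) (hFr (rt 0) (k 0))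
  obtain ⟨hσc, hfac₀, hfac₁⟩ := newton_factor_bounds (d₀ := d₀) (d₄ := d₄) (Δk := Δk)
    (c := d₀ * c₀ * α) hα hσ hσα hσd₁ hε0 (by linarith) (by linarith) hd₃.le hd₄.le
    ((norm_nonneg _).trans hinit) hΔk.le
    (by nlinarith [mul_mul_le_of_eq_div hε0.le hd₁ hd₃ hc₀, mul_pos (by linarith : 0 < d₀) hα])
    (by rw [div_mul_eq_mul_div, div_le_iff₀ (by positivity)] at hstep1; linarith)
  obtain ⟨hmem, hle, hrate⟩ := norm_sub_sweep_le (hP (n + 1) hn) hF hFrr hFkr (hrtzero _ hn)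
    (hrtmem _ hn) (hXsmono n hn hr) (hlow n hn.le) (hlow _ hn)
    (by rw [hk, hk]; push_cast; ring_nf; rw [abs_of_pos hΔk]) (hrtstep n hn) (hrr0 n hn)
    (hA n hn) (hB n hn) (hrrstep n hn) (hf _ (by omega) hn) hJ hα hσ hε hαε hσc
    (hbdef ▸ hfac₀) (hqdef ▸ hfac₁) hq₀ (by linarith) hqb hb₁.le hρδ hγ
  refine ⟨hle, hmem, hrate.trans ?_⟩
  have : 0 ≤ q ^ (J - 1) * Δk * (d₂ / (2 * Real.sqrt α)) := by positivity
  rw [div_div]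
  linarith

/-- Convergence rate of the projected recursive Newton method with noisy data
(Theorem 2.2, explicit form). -/
theorem stmt_16 {X Y : Type*}
    [NormedAddCommGroup X] [InnerProductSpace ℝ X] [CompleteSpace X]
    [NormedAddCommGroup Y] [InnerProductSpace ℝ Y] [CompleteSpace Y]
    (N J : ℕ) (hN : 1 ≤ N) (hJ : 1 ≤ J)
    (kl Δk : ℝ) (hΔk : 0 < Δk)
    (k : ℕ → ℝ) (hk : ∀ n : ℕ, k n = kl + n * Δk)
    (Xs : ℕ → Submodule ℝ X)
    (hXsclosed : ∀ n, n ≤ N → IsClosed ((Xs n : Set X)))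
    (hXsmono : ∀ n, n < N → Xs n ≤ Xs (n + 1))
    (P : ℕ → X →L[ℝ] X)
    (hP : ∀ n, n ≤ N → ∀ x : X, P n x ∈ Xs n ∧ x - P n x ∈ (Xs n)ᗮ)
    (F : X × ℝ → Y) (hF : ContDiff ℝ 2 F)
    (d₀ d₁ d₂ d₃ d₄ : ℝ) (hd₀ : 1 ≤ d₀) (hd₁ : 0 < d₁) (hd₂ : 0 < d₂)
    (hd₃ : 0 < d₃) (hd₄ : 0 < d₄)
    (hFr : ∀ (r : X) (κ : ℝ), ‖fderiv ℝ (fun r' => F (r', κ)) r‖ ≤ d₁)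
    (hFk : ∀ (r : X) (κ : ℝ), ‖deriv (fun κ' => F (r, κ')) κ‖ ≤ d₂)
    (hFrr : ∀ (r : X) (κ : ℝ),
      ‖fderiv ℝ (fun r' => fderiv ℝ (fun r'' => F (r'', κ)) r') r‖ ≤ d₃)
    (hFkr : ∀ (r : X) (κ : ℝ),
      ‖deriv (fun κ' => fderiv ℝ (fun r' => F (r', κ')) r) κ‖ ≤ d₄)
    (rt : ℕ → X)
    (hrtmem : ∀ n, n ≤ N → rt n ∈ Xs n)
    (hrtzero : ∀ n, n ≤ N → F (rt n, k n) = 0)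
    (hrtstep : ∀ n, n < N → ‖rt (n + 1) - rt n‖ ≤ d₀ * Δk)
    (σ : ℝ) (hσ : 0 < σ)
    (hlow : ∀ n, n ≤ N → ∀ x : X,
      σ * ‖x‖ ≤ ‖fderiv ℝ (fun r' => F (r', k n)) (rt n) x‖)
    (δt : ℝ) (hδt : 0 ≤ δt)
    (f : ℕ → Y) (hf : ∀ n, 1 ≤ n → n ≤ N → ‖f n‖ ≤ δt)
    (ε ξ α : ℝ) (hε0 : 0 < ε) (hε1 : ε < 3 / (2 + d₀))
    (hξ0 : 0 < ξ) (hξ1 : ξ < 1)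
    (hα : 0 < α) (hαle : α ≤ ε * σ ^ 2 / (3 - ε))
    (c₀ q b : ℝ)
    (hc₀ : c₀ = 4 * ε / (3 * d₃ * (9 * d₁ + Real.sqrt α)))
    (hqdef : q = ε * (1 + d₀) / 3)
    (hbdef : b = ε * (2 + d₀) / 3)
    (hstep1 : 9 * d₁ * d₄ / (4 * α) * Δk ≤ ε / 3)
    (hstep2 : Δk * (d₀ + d₂ / (2 * Real.sqrt α)) ≤ (1 - ξ) * (1 - b) * d₀ * c₀ * α)
    (hstep3 : δt / (2 * Real.sqrt α) ≤ ξ * (1 - b) * d₀ * c₀ * α)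
    (r : ℕ → X) (rr : ℕ → ℕ → X)
    (A : ℕ → ℕ → X →L[ℝ] Y)
    (hA : ∀ n, n < N → ∀ j, j < J →
      A n j = fderiv ℝ (fun r' => F (r', k (n + 1))) (rr n j))
    (B : ℕ → ℕ → X →L[ℝ] X)
    (hB : ∀ n, n < N → ∀ j, j < J →
      B n j ∘L (α • (1 : X →L[ℝ] X) +
        ContinuousLinearMap.adjoint (A n j) ∘L A n j) = 1 ∧
      (α • (1 : X →L[ℝ] X) +
        ContinuousLinearMap.adjoint (A n j) ∘L A n j) ∘L B n j = 1)
    (hrr0 : ∀ n, n < N → rr n 0 = r n)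
    (hrrstep : ∀ n, n < N → ∀ j, j < J →
      rr n (j + 1) = rr n j - P (n + 1)
        ((B n j ∘L ContinuousLinearMap.adjoint (A n j))
          (F (rr n j, k (n + 1)) + f (n + 1))))
    (hrJ : ∀ n, n < N → r (n + 1) = rr n J)
    (hr0mem : r 0 ∈ Xs 0)
    (hinit : ‖rt 0 - r 0‖ ≤ d₀ * c₀ * α) :
    (∀ n, n ≤ N → ‖rt n - r n‖ ≤ d₀ * c₀ * α) ∧
    ‖rt N - r N‖ ≤
      (δt / (2 * Real.sqrt α * (1 - q)) +
        q ^ (J - 1) * Δk * (d₀ + d₂ / (2 * Real.sqrt α))) / (1 - q ^ (J - 1) * b) +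
      (q ^ (J - 1) * b) ^ N * (d₀ * c₀ * α) :=
  stmt_16_general N J hJ kl Δk hΔk k hk Xs hXsmono P hP F hF d₀ d₁ d₂ d₃ d₄ hd₀ hd₁ hd₂ hd₃ hd₄ hFr
    hFrr hFkr rt hrtmem hrtzero hrtstep σ hσ hlow δt hδt f hf ε ξ α hε0 hε1 hα hαle c₀ q b hc₀ hqdef
    hbdef hstep1 hstep2 hstep3 r rr A hA B hB hrr0 hrrstep hrJ hr0mem hinit
end
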